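/- arXiv:2204.08051 — 3 statements merged into one kernel-verified Lean document; each statement's English description precedes it below -/
import Mathlib

section
/- Let A be a subset of X of finite outer measure μ(A), and s any monotone size. Then for 0 < p ≤ p₁ ≤ ∞ and 0 < q ≤ ∞: ‖F·1_A‖_{L^{p,q}(s)} ≤ 2^{1/p} ‖F·1_A‖_{L^{p₁,q}(s)} · μ(A)^{1/p - 1/p₁}. -/
open ENNReal

/-- A size is monotone in the function argument. -/
def IsSize {X : Type*} (s : (X → ℝ≥0∞) → Set X → ℝ≥0∞) : Prop :=
  ∀ (F G : X → ℝ≥0∞) (T : Set X), (∀ x, F x ≤ G x) → s F T ≤ s G T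

/-- Outer essential supremum `outsup_s F = sup_{T ∈ 𝒯} s(F,T)`. -/
noncomputable def outSup {X : Type*} (𝒯 : Set (Set X))
    (s : (X → ℝ≥0∞) → Set X → ℝ≥0∞) (F : X → ℝ≥0∞) : ℝ≥0∞ :=
  ⨆ T ∈ 𝒯, s F T

/-- Super-level measure `μ_s[F](τ) = inf {μ(A) : outsup_s(F·1_{X∖A}) ≤ τ}`. -/
noncomputable def superLevel {X : Type*} (μ : Set X → ℝ≥0∞) (𝒯 : Set (Set X))
    (s : (X → ℝ≥0∞) → Set X → ℝ≥0∞) (F : X → ℝ≥0∞) (τ : ℝ≥0∞) : ℝ≥0∞ :=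
  ⨅ (A : Set X) (_ : outSup 𝒯 s (Set.indicator Aᶜ F) ≤ τ), μ A

/-- Nondecreasing rearrangement `F^{*,s}(t) = inf {τ : μ_s[F](τ) ≤ t}`. -/
noncomputable def rearr {X : Type*} (μ : Set X → ℝ≥0∞) (𝒯 : Set (Set X))
    (s : (X → ℝ≥0∞) → Set X → ℝ≥0∞) (F : X → ℝ≥0∞) (t : ℝ) : ℝ≥0∞ :=
  sInf {τ : ℝ≥0∞ | superLevel μ 𝒯 s F τ ≤ ENNReal.ofReal t}

/-- Outer Lorentz quasinorm `‖F‖_{L^{p,q}(s)} = ‖ t^{1/p} F^{*,s}(t) ‖_{L^q(dt/t)}`. -/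
noncomputable def outerLorentz {X : Type*} (μ : Set X → ℝ≥0∞) (𝒯 : Set (Set X))
    (s : (X → ℝ≥0∞) → Set X → ℝ≥0∞) (F : X → ℝ≥0∞) (p q : ℝ≥0∞) : ℝ≥0∞ :=
  if q = ∞ then ⨆ (t : ℝ) (_ : 0 < t), ENNReal.ofReal t ^ p.toReal⁻¹ * rearr μ 𝒯 s F t
  else (∫⁻ t in Set.Ioi (0 : ℝ),
      (ENNReal.ofReal t ^ p.toReal⁻¹ * rearr μ 𝒯 s F t) ^ q.toReal *
        ENNReal.ofReal t⁻¹) ^ q.toReal⁻¹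

open MeasureTheory

/-!
Outside `A` the function `F·1_A` vanishes, so removing `A` itself makes its outer supremum zero.
Hence the super-level measure of `F·1_A` never exceeds `μ(A)` and its rearrangement vanishes
for `t ≥ μ(A)`. On the remaining range `t < μ(A)` one has
`t^{1/p} = t^{1/p - 1/p₁} t^{1/p₁} ≤ μ(A)^{1/p - 1/p₁} t^{1/p₁}`, and this pointwise bound passes
through the `L^q(dt/t)` quasinorm.
-/

theorem superLevel_indicator_le {X : Type*} (μ : Set X → ℝ≥0∞) (𝒯 : Set (Set X))
    {s : (X → ℝ≥0∞) → Set X → ℝ≥0∞} (hs0 : ∀ T : Set X, s (fun _ => 0) T = 0)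
    (A : Set X) (F : X → ℝ≥0∞) (τ : ℝ≥0∞) :
    superLevel μ 𝒯 s (A.indicator F) τ ≤ μ A := by
  have hvanish : Aᶜ.indicator (A.indicator F) = fun _ => 0 := by
    rw [Set.indicator_indicator, Set.inter_comm, Set.inter_compl_self, Set.indicator_empty]
  refine iInf₂_le A ?_
  rw [hvanish]
  exact (iSup₂_le fun T _ => (hs0 T).le).trans zero_le

theorem rearr_indicator_eq_zero {X : Type*} (μ : Set X → ℝ≥0∞) (𝒯 : Set (Set X))
    {s : (X → ℝ≥0∞) → Set X → ℝ≥0∞} (hs0 : ∀ T : Set X, s (fun _ => 0) T = 0)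
    {A : Set X} (F : X → ℝ≥0∞) {t : ℝ} (ht : μ A ≤ ENNReal.ofReal t) :
    rearr μ 𝒯 s (A.indicator F) t = 0 :=
  nonpos_iff_eq_zero.mp <| sInf_le <| (superLevel_indicator_le μ 𝒯 hs0 A F 0).trans ht

theorem ENNReal.rpow_mul_le_rpow_sub_mul_rpow_mul {u M x : ℝ≥0∞} {a b : ℝ} (hb : 0 ≤ b)
    (hba : b ≤ a) (hx : M ≤ u → x = 0) : u ^ a * x ≤ M ^ (a - b) * (u ^ b * x) := by
  rcases le_or_gt M u with hMu | huM
  · simp [hx hMu]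
  · calc u ^ a * x = u ^ (a - b) * (u ^ b * x) := by
          rw [← mul_assoc, ← ENNReal.rpow_add_of_nonneg _ _ (sub_nonneg.mpr hba) hb,
            sub_add_cancel]
      _ ≤ M ^ (a - b) * (u ^ b * x) := by gcongr

theorem lintegral_rpow_mul_rpow_inv_le_mul {α : Type*} [MeasurableSpace α] {ν : Measure α}
    {g h w : α → ℝ≥0∞} {C : ℝ≥0∞} (hC : C ≠ ∞) {r : ℝ} (hr : 0 < r)
    (hgh : ∀ᵐ t ∂ν, g t ≤ C * h t) :
    (∫⁻ t, g t ^ r * w t ∂ν) ^ r⁻¹ ≤ C * (∫⁻ t, h t ^ r * w t ∂ν) ^ r⁻¹ := by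
  have hint : ∫⁻ t, g t ^ r * w t ∂ν ≤ C ^ r * ∫⁻ t, h t ^ r * w t ∂ν := by
    rw [← lintegral_const_mul' _ _ (rpow_ne_top_of_nonneg hr.le hC)]
    refine lintegral_mono_ae (hgh.mono fun t ht => ?_)
    calc g t ^ r * w t ≤ (C * h t) ^ r * w t := by gcongr
      _ = C ^ r * (h t ^ r * w t) := by rw [ENNReal.mul_rpow_of_nonneg _ _ hr.le, mul_assoc]
  calc (∫⁻ t, g t ^ r * w t ∂ν) ^ r⁻¹ ≤ (C ^ r * ∫⁻ t, h t ^ r * w t ∂ν) ^ r⁻¹ := by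
        gcongr
    _ = C * (∫⁻ t, h t ^ r * w t ∂ν) ^ r⁻¹ := by
        rw [ENNReal.mul_rpow_of_nonneg _ _ (inv_nonneg.mpr hr.le), ← ENNReal.rpow_mul,
          mul_inv_cancel₀ hr.ne', ENNReal.rpow_one]

theorem outerLorentz_le_mul_of_forall_le {X : Type*} (μ : Set X → ℝ≥0∞) (𝒯 : Set (Set X))
    (s : (X → ℝ≥0∞) → Set X → ℝ≥0∞) {F G : X → ℝ≥0∞} {p p' q C : ℝ≥0∞} (hC : C ≠ ∞)
    (hq : 0 < q)
    (hFG : ∀ t : ℝ, 0 < t → ENNReal.ofReal t ^ p.toReal⁻¹ * rearr μ 𝒯 s F t ≤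
      C * (ENNReal.ofReal t ^ p'.toReal⁻¹ * rearr μ 𝒯 s G t)) :
    outerLorentz μ 𝒯 s F p q ≤ C * outerLorentz μ 𝒯 s G p' q := by
  unfold outerLorentz
  by_cases hqt : q = ∞
  · simp only [if_pos hqt]
    refine iSup₂_le fun t ht => (hFG t ht).trans ?_
    gcongr
    exact le_iSup₂_of_le t ht le_rfl
  · simp only [if_neg hqt]
    exact lintegral_rpow_mul_rpow_inv_le_mul hC (ENNReal.toReal_pos hq.ne' hqt)
      ((ae_restrict_iff' measurableSet_Ioi).mpr (ae_of_all _ hFG))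

theorem ENNReal.toReal_inv_le_toReal_inv {p p₁ : ℝ≥0∞} (hp : 0 < p) (hpp : p ≤ p₁) :
    p₁.toReal⁻¹ ≤ p.toReal⁻¹ := by
  rw [← ENNReal.toReal_inv, ← ENNReal.toReal_inv]
  exact ENNReal.toReal_mono (ENNReal.inv_ne_top.mpr hp.ne') (ENNReal.inv_le_inv.mpr hpp)

theorem stmt7_general {X : Type*} (𝒯 : Set (Set X)) (μ : Set X → ℝ≥0∞)
    (s : (X → ℝ≥0∞) → Set X → ℝ≥0∞)
    (hs0 : ∀ T : Set X, s (fun _ => 0) T = 0)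
    (A : Set X) (hA : μ A < ∞) (F : X → ℝ≥0∞)
    (p p₁ q : ℝ≥0∞) (hp : 0 < p) (hpp : p ≤ p₁) (hq : 0 < q) :
    outerLorentz μ 𝒯 s (Set.indicator A F) p q ≤
      (2 : ℝ≥0∞) ^ p.toReal⁻¹ * outerLorentz μ 𝒯 s (Set.indicator A F) p₁ q *
        μ A ^ (p.toReal⁻¹ - p₁.toReal⁻¹) := by
  have hexp := ENNReal.toReal_inv_le_toReal_inv hp hpp
  have hcomp : outerLorentz μ 𝒯 s (A.indicator F) p q ≤
      μ A ^ (p.toReal⁻¹ - p₁.toReal⁻¹) * outerLorentz μ 𝒯 s (A.indicator F) p₁ q :=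
    outerLorentz_le_mul_of_forall_le μ 𝒯 s
      (rpow_ne_top_of_nonneg (sub_nonneg.mpr hexp) hA.ne) hq fun t _ =>
        ENNReal.rpow_mul_le_rpow_sub_mul_rpow_mul (by positivity) hexp
          (rearr_indicator_eq_zero μ 𝒯 hs0 F)
  have htwo : (1 : ℝ≥0∞) ≤ 2 ^ p.toReal⁻¹ := by
    simpa using ENNReal.rpow_le_rpow_of_exponent_le one_le_two (by positivity : 0 ≤ p.toReal⁻¹)
  calc outerLorentz μ 𝒯 s (A.indicator F) p q
      ≤ outerLorentz μ 𝒯 s (A.indicator F) p₁ q * μ A ^ (p.toReal⁻¹ - p₁.toReal⁻¹) := by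
        rwa [mul_comm]
    _ ≤ _ := by gcongr; exact le_mul_of_one_le_left zero_le htwo

/-- for a set `A` of finite outer measure and a monotone size `s`
(vanishing on the zero function), for `0 < p ≤ p₁ ≤ ∞` and `0 < q ≤ ∞`:
`‖F·1_A‖_{L^{p,q}(s)} ≤ 2^{1/p} ‖F·1_A‖_{L^{p₁,q}(s)} μ(A)^{1/p - 1/p₁}`. -/
theorem stmt7 {X : Type*} (𝒯 : Set (Set X)) (μ : Set X → ℝ≥0∞)
    (s : (X → ℝ≥0∞) → Set X → ℝ≥0∞) (hs : IsSize s)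
    (hs0 : ∀ T : Set X, s (fun _ => 0) T = 0)
    (A : Set X) (hA : μ A < ∞) (F : X → ℝ≥0∞)
    (p p₁ q : ℝ≥0∞) (hp : 0 < p) (hpp : p ≤ p₁) (hq : 0 < q) :
    outerLorentz μ 𝒯 s (Set.indicator A F) p q ≤
      (2 : ℝ≥0∞) ^ p.toReal⁻¹ * outerLorentz μ 𝒯 s (Set.indicator A F) p₁ q *
        μ A ^ (p.toReal⁻¹ - p₁.toReal⁻¹) :=
  stmt7_general 𝒯 μ s hs0 A hA F p p₁ q hp hpp hq
end

section
/- (Reverse-Hölder outer estimate, discrete core) Let m ≥ 2, suppose functions F₁,…,F_m on a set X with weighted counting measure satisfy: normalizations ‖F₁‖_{X_a^{p₁,∞}} = 1 and ‖F_ℓ‖_{L^{p_ℓ,∞}} ≤ 1, ‖F_ℓ‖_{L^∞} ≤ 1 for 2 ≤ ℓ ≤ m, where 1 < a ≤ p₁ < ∞, 1 ≤ p_ℓ < ∞, and ε := (Σ_ℓ 1/p_ℓ) − 1 > 0, and the sizes satisfy the submultiplicative Hölder condition with s = size₁. Then (1/|J|)·Σ_{P∈X} |I_P|·|F₁F₂⋯F_m(P)|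 ≤ C_m · a/(ε(a−1)). -/
open ENNReal

/-- The outer measure generated by covering with sets from `𝒯`, with cost `top T / |J|`. -/
noncomputable def outerMeasureOf {X : Type*} (𝒯 : Set (Set X)) (top : Set X → ℝ≥0∞)
    (Jvol : ℝ≥0∞) (A : Set X) : ℝ≥0∞ :=
  ⨅ (𝒞 : Finset (Set X)) (_ : ↑𝒞 ⊆ 𝒯) (_ : A ⊆ ⋃₀ ↑𝒞), (∑ T ∈ 𝒞, top T) / Jvol

/-- `size₁(F,T) = (Σ_{P ∈ T} |I_P| F(P)) / |I_T|` on a finite tile set. -/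
noncomputable def size1 {X : Type*} [Fintype X] (ι : X → ℝ≥0∞) (top : Set X → ℝ≥0∞)
    (F : X → ℝ≥0∞) (T : Set X) : ℝ≥0∞ :=
  (∑ P : X, T.indicator (fun P => ι P * F P) P) / top T

/-- The reverse-Hölder quasinorm
`‖F‖_{X_a^{p,∞}(s)} = sup_A ‖F 1_A‖_{L^{a,∞}(s)} / μ(A)^{1/a - 1/p}`. -/
noncomputable def xNorm {X : Type*} (μ : Set X → ℝ≥0∞) (𝒯 : Set (Set X))
    (s : (X → ℝ≥0∞) → Set X → ℝ≥0∞) (F : X → ℝ≥0∞) (a p : ℝ≥0∞) : ℝ≥0∞ :=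
  ⨆ A : Set X, outerLorentz μ 𝒯 s (Set.indicator A F) a ∞ /
    μ A ^ (a.toReal⁻¹ - p.toReal⁻¹)

/-!
Cut `X` into layers `W n \ W (n + 1)` of measure `≲ 2ⁿ` on which the weak-type bounds make
`outsup F_ℓ ≲ 2^{-n/p_ℓ}` for `ℓ ≥ 2`. A set of measure `≲ t₀` is in turn peeled, using the
`X`-norm bound of `F₁` at the levels `t₀ 2⁻ᵏ`, into pieces of measure `≲ t₀ 2⁻ᵏ` on which
`outsup F₁ ≲ (t₀ 2⁻ᵏ)^{-1/a} t₀^{1/a - 1/p₁}`. On every piece the Hölder condition bounds the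
sum by `μ(piece) · ∏ outsup F_ℓ`. Summing the geometric series in `k` gives
`a/(a-1) · t₀^{1 - 1/p₁}`, and then the one in `n` has ratio `2^{-ε}` and gives the factor `1/ε`;
what is left after `N` layers is `≲ 2^{-N Σ_{ℓ≥2} 1/p_ℓ}`, which tends to `0`.
-/

section OuterMeasure

variable {X : Type*} {𝒯 : Set (Set X)} {top : Set X → ℝ≥0∞} {Jvol : ℝ≥0∞}

lemma outerMeasureOf_le_of_cover {𝒞 : Finset (Set X)} (h𝒞 : ↑𝒞 ⊆ 𝒯) {A : Set X}
    (hA : A ⊆ ⋃₀ ↑𝒞) : outerMeasureOf 𝒯 top Jvol A ≤ (∑ T ∈ 𝒞, top T) / Jvol :=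
  iInf₂_le_of_le 𝒞 h𝒞 (iInf_le _ hA)

lemma outerMeasureOf_mono : Monotone (outerMeasureOf 𝒯 top Jvol) := fun _ _ hAB =>
  le_iInf₂ fun _ h𝒞 => le_iInf fun hB => outerMeasureOf_le_of_cover h𝒞 (hAB.trans hB)

lemma outerMeasureOf_empty : outerMeasureOf 𝒯 top Jvol ∅ = 0 :=
  nonpos_iff_eq_zero.1 <|
    (outerMeasureOf_le_of_cover (𝒞 := ∅) (by simp) (by simp)).trans (by simp)

lemma outerMeasureOf_union_le (A B : Set X) :
    outerMeasureOf 𝒯 top Jvol (A ∪ B) ≤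
      outerMeasureOf 𝒯 top Jvol A + outerMeasureOf 𝒯 top Jvol B := by
  classical
  simp only [outerMeasureOf, ENNReal.iInf_add, ENNReal.add_iInf]
  refine le_iInf₂ fun 𝒞B hB => le_iInf fun hBc => le_iInf₂ fun 𝒞A hA => le_iInf fun hAc => ?_
  calc outerMeasureOf 𝒯 top Jvol (A ∪ B) ≤ (∑ T ∈ 𝒞A ∪ 𝒞B, top T) / Jvol :=
        outerMeasureOf_le_of_cover (by simpa using Set.union_subset hA hB)
          ((Set.union_subset_union hAc hBc).trans (by simp [Set.sUnion_union]))
    _ ≤ (∑ T ∈ 𝒞A, top T) / Jvol + (∑ T ∈ 𝒞B, top T) / Jvol := by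
        rw [← ENNReal.add_div]
        exact ENNReal.div_le_div_right (le_self_add.trans_eq Finset.sum_union_inter) _

lemma outerMeasureOf_biUnion_le {α : Type*} (s : Finset α) (A : α → Set X) :
    outerMeasureOf 𝒯 top Jvol (⋃ i ∈ s, A i) ≤ ∑ i ∈ s, outerMeasureOf 𝒯 top Jvol (A i) := by
  classical
  induction s using Finset.induction with
  | empty => simp [outerMeasureOf_empty]
  | insert b s hb ih =>
    rw [Finset.set_biUnion_insert, Finset.sum_insert hb]
    exact (outerMeasureOf_union_le _ _).trans (add_le_add_right ih _)

lemma outerMeasureOf_lt_top [Finite X] (htop : ∀ T ∈ 𝒯, top T ≠ ∞)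
    (hcov : ∀ x : X, ∃ T ∈ 𝒯, x ∈ T) (hJ : Jvol ≠ 0) (A : Set X) :
    outerMeasureOf 𝒯 top Jvol A < ∞ := by
  have := Fintype.ofFinite X
  classical
  choose T hT𝒯 hxT using hcov
  refine (outerMeasureOf_le_of_cover (𝒞 := Finset.univ.image T) ?_ ?_).trans_lt
    (ENNReal.div_lt_top ?_ hJ)
  · simpa [Set.range_subset_iff] using hT𝒯
  · exact fun x _ => Set.mem_sUnion.2 ⟨T x, by simp, hxT x⟩
  · simpa using fun x => htop _ (hT𝒯 x)

lemma exists_cover_eq_outerMeasureOf [Finite X] (hcov : ∀ x : X, ∃ T ∈ 𝒯, x ∈ T) (A : Set X) :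
    ∃ 𝒞 : Finset (Set X), ↑𝒞 ⊆ 𝒯 ∧ A ⊆ ⋃₀ ↑𝒞 ∧
      (∑ T ∈ 𝒞, top T) / Jvol = outerMeasureOf 𝒯 top Jvol A := by
  have := Fintype.ofFinite X
  classical
  choose T hT𝒯 hxT using hcov
  have : Nonempty {𝒞 : Finset (Set X) // ↑𝒞 ⊆ 𝒯 ∧ A ⊆ ⋃₀ ↑𝒞} :=
    ⟨⟨Finset.univ.image T, by simpa [Set.range_subset_iff] using hT𝒯,
      fun x _ => Set.mem_sUnion.2 ⟨T x, by simp, hxT x⟩⟩⟩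
  obtain ⟨⟨𝒞, h𝒞, hA⟩, hmin⟩ :=
    Finite.exists_min fun 𝒞 : {𝒞 : Finset (Set X) // ↑𝒞 ⊆ 𝒯 ∧ A ⊆ ⋃₀ ↑𝒞} =>
      (∑ T ∈ 𝒞.1, top T) / Jvol
  exact ⟨𝒞, h𝒞, hA, le_antisymm (le_iInf₂ fun 𝒞' h𝒞' => le_iInf fun hA' => hmin ⟨𝒞', h𝒞', hA'⟩)
    (outerMeasureOf_le_of_cover h𝒞 hA)⟩

/-- There are finitely many trees, so a nonempty set has measure at least `min_T top T / Jvol`. -/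
lemma exists_eq_empty_of_outerMeasureOf_le_div_two_pow [Finite X] (htop : ∀ T ∈ 𝒯, top T ≠ 0)
    (hJ : Jvol ≠ ∞) (B : ℕ → Set X) (c : ℝ)
    (hB : ∀ k, outerMeasureOf 𝒯 top Jvol (B k) ≤ ENNReal.ofReal (c / 2 ^ k)) :
    ∃ K, B K = ∅ := by
  classical
  set θ := (Set.toFinite 𝒯).toFinset.inf fun T => top T / Jvol
  have hθ : 0 < θ := (Finset.lt_inf_iff ENNReal.zero_lt_top).2 fun T hT =>
    ENNReal.div_pos (htop T ((Set.Finite.mem_toFinset _).1 hT)) hJ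
  have hθA : ∀ A : Set X, A.Nonempty → θ ≤ outerMeasureOf 𝒯 top Jvol A := by
    rintro A ⟨x, hx⟩
    refine le_iInf₂ fun 𝒞 h𝒞 => le_iInf fun hA => ?_
    obtain ⟨T, hT𝒞, hxT⟩ := Set.mem_sUnion.1 (hA hx)
    exact (Finset.inf_le ((Set.Finite.mem_toFinset _).2 (h𝒞 hT𝒞))).trans
      (ENNReal.div_le_div_right (Finset.single_le_sum (fun _ _ => zero_le) hT𝒞) _)
  obtain ⟨r, hr0, hrθ⟩ := ENNReal.lt_iff_exists_nnreal_btwn.1 hθ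
  obtain ⟨K, hK⟩ := pow_unbounded_of_one_lt (c / r) one_lt_two
  refine ⟨K, Set.not_nonempty_iff_eq_empty.1 fun hne => (hθA _ hne).not_gt ?_⟩
  refine (hB K).trans_lt (lt_of_le_of_lt ?_ hrθ)
  rw [← ENNReal.ofReal_coe_nnreal]
  refine ENNReal.ofReal_le_ofReal ((div_le_iff₀ (by positivity)).2 ?_)
  have hr : (0 : ℝ) < r := by exact_mod_cast hr0
  nlinarith [(div_lt_iff₀ hr).1 hK]

end OuterMeasure

section Rearrangement

variable {X : Type*} {μ : Set X → ℝ≥0∞} {𝒯 : Set (Set X)} {s : (X → ℝ≥0∞) → Set X → ℝ≥0∞}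
  {F : X → ℝ≥0∞}

lemma outSup_indicator_mono (hs : IsSize s) {A B : Set X} (hAB : A ⊆ B) :
    outSup 𝒯 s (A.indicator F) ≤ outSup 𝒯 s (B.indicator F) :=
  iSup₂_mono fun T _ => hs _ _ T fun x =>
    Set.indicator_le_indicator_of_subset hAB (fun _ => zero_le) x

lemma rearr_le_of_outerLorentz_le {p Λ : ℝ≥0∞} (h : outerLorentz μ 𝒯 s F p ∞ ≤ Λ) {t : ℝ}
    (ht : 0 < t) : rearr μ 𝒯 s F t ≤ ENNReal.ofReal t ^ (-p.toReal⁻¹) * Λ := by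
  have hterm : ENNReal.ofReal t ^ p.toReal⁻¹ * rearr μ 𝒯 s F t ≤ Λ :=
    (le_iSup₂ (f := fun (t : ℝ) (_ : 0 < t) => ENNReal.ofReal t ^ p.toReal⁻¹ * rearr μ 𝒯 s F t)
      t ht).trans (by simpa [outerLorentz] using h)
  have ht' : ENNReal.ofReal t ^ p.toReal⁻¹ ≠ 0 :=
    (ENNReal.rpow_pos (ENNReal.ofReal_pos.2 ht) ENNReal.ofReal_ne_top).ne'
  rw [ENNReal.rpow_neg, ← ENNReal.div_eq_inv_mul, ENNReal.le_div_iff_mul_le (.inl ht')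
    (.inl (ENNReal.rpow_ne_top_of_nonneg (by positivity) ENNReal.ofReal_ne_top)), mul_comm]
  exact hterm

lemma exists_outSup_compl_le_of_rearr_lt {t : ℝ} (ht : 0 < t) {ρ : ℝ≥0∞}
    (h : rearr μ 𝒯 s F t < ρ) :
    ∃ B, μ B ≤ 2 * ENNReal.ofReal t ∧ outSup 𝒯 s (Bᶜ.indicator F) ≤ ρ := by
  obtain ⟨τ, hτ, hτρ⟩ := sInf_lt_iff.1 h
  have hlt : superLevel μ 𝒯 s F τ < 2 * ENNReal.ofReal t := by
    rw [two_mul]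
    exact hτ.trans_lt (ENNReal.lt_add_right ENNReal.ofReal_ne_top (ENNReal.ofReal_pos.2 ht).ne')
  obtain ⟨B, hB⟩ := iInf_lt_iff.1 hlt
  obtain ⟨hBF, hμB⟩ := iInf_lt_iff.1 hB
  exact ⟨B, hμB.le, hBF.trans hτρ.le⟩

lemma exists_outSup_compl_le_of_outerLorentz_le {p : ℝ≥0∞} {Λ : ℝ} (hΛ : 0 < Λ)
    (h : outerLorentz μ 𝒯 s F p ∞ ≤ ENNReal.ofReal Λ) {t : ℝ} (ht : 0 < t) :
    ∃ B, μ B ≤ 2 * ENNReal.ofReal t ∧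
      outSup 𝒯 s (Bᶜ.indicator F) ≤ ENNReal.ofReal (2 * t ^ (-p.toReal⁻¹) * Λ) := by
  refine exists_outSup_compl_le_of_rearr_lt ht ((rearr_le_of_outerLorentz_le h ht).trans_lt ?_)
  rw [ENNReal.ofReal_rpow_of_pos ht, ← ENNReal.ofReal_mul (by positivity)]
  exact (ENNReal.ofReal_lt_ofReal_iff (by positivity)).2
    (by nlinarith [Real.rpow_pos_of_pos ht (-p.toReal⁻¹)])

lemma outerLorentz_indicator_le_of_xNorm_le_one {a p : ℝ≥0∞} (h : xNorm μ 𝒯 s F a p ≤ 1)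
    (A : Set X) :
    outerLorentz μ 𝒯 s (A.indicator F) a ∞ ≤ μ A ^ (a.toReal⁻¹ - p.toReal⁻¹) := by
  have hA := (le_iSup (fun A : Set X => outerLorentz μ 𝒯 s (A.indicator F) a ∞ /
    μ A ^ (a.toReal⁻¹ - p.toReal⁻¹)) A).trans h
  simpa using (ENNReal.div_le_iff_le_mul (.inr (by simp)) (.inr one_ne_zero)).1 hA

end Rearrangement

lemma sum_indicator_div_le_outerMeasureOf_mul_prod_outSup {X κ : Type*} [Fintype X] [Fintype κ]
    {𝒯 : Set (Set X)} {top : Set X → ℝ≥0∞} {Jvol : ℝ≥0∞} {ι : X → ℝ≥0∞}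
    {sj : κ → (X → ℝ≥0∞) → Set X → ℝ≥0∞}
    (htop : ∀ T ∈ 𝒯, top T ≠ 0 ∧ top T ≠ ∞) (hcov : ∀ x : X, ∃ T ∈ 𝒯, x ∈ T)
    (hHolder : ∀ (G : κ → X → ℝ≥0∞), ∀ T ∈ 𝒯,
      size1 ι top (fun x => ∏ j, G j x) T ≤ ∏ j, sj j (G j) T)
    (F : κ → X → ℝ≥0∞) (B : Set X) :
    (∑ P, B.indicator (fun P => ι P * ∏ j, F j P) P) / Jvol ≤
      outerMeasureOf 𝒯 top Jvol B * ∏ j, outSup 𝒯 (sj j) (B.indicator (F j)) := by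
  obtain ⟨𝒞, h𝒞, hB, hcost⟩ := exists_cover_eq_outerMeasureOf (top := top) (Jvol := Jvol) hcov B
  rw [← hcost, ← ENNReal.mul_div_right_comm, Finset.sum_mul]
  refine ENNReal.div_le_div_right ?_ _
  calc ∑ P, B.indicator (fun P => ι P * ∏ j, F j P) P
      ≤ ∑ T ∈ 𝒞, ∑ P, T.indicator (fun P => ι P * ∏ j, B.indicator (F j) P) P := by
        rw [Finset.sum_comm]
        refine Finset.sum_le_sum fun P _ => ?_
        by_cases hP : P ∈ B
        · obtain ⟨T, hT𝒞, hPT⟩ := Set.mem_sUnion.1 (hB hP)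
          refine le_of_eq_of_le ?_ (Finset.single_le_sum (fun _ _ => zero_le) hT𝒞)
          simp [hP, hPT]
        · simp [hP]
    _ ≤ ∑ T ∈ 𝒞, top T * ∏ j, outSup 𝒯 (sj j) (B.indicator (F j)) := by
        refine Finset.sum_le_sum fun T hT𝒞 => ?_
        have hT := h𝒞 hT𝒞
        calc ∑ P, T.indicator (fun P => ι P * ∏ j, B.indicator (F j) P) P
            = top T * size1 ι top (fun x => ∏ j, B.indicator (F j) x) T := by
              rw [size1, ENNReal.mul_div_cancel (htop T hT).1 (htop T hT).2]
          _ ≤ top T * ∏ j, outSup 𝒯 (sj j) (B.indicator (F j)) := by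
              gcongr
              refine (hHolder _ T hT).trans (Finset.prod_le_prod' fun j _ => ?_)
              exact le_iSup₂ (f := fun T (_ : T ∈ 𝒯) => sj j (B.indicator (F j)) T) T hT

lemma sum_indicator_div_le_sum_sdiff_add {X : Type*} [Fintype X] (B : ℕ → Set X)
    (g : X → ℝ≥0∞) (c : ℝ≥0∞) (K : ℕ) :
    (∑ P, (B 0).indicator g P) / c ≤
      ∑ k ∈ Finset.range K, (∑ P, (B k \ B (k + 1)).indicator g P) / c +
        (∑ P, (B K).indicator g P) / c := by
  induction K with
  | zero => simp
  | succ K ih =>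
    refine ih.trans ?_
    rw [Finset.sum_range_succ, add_assoc, ← ENNReal.add_div, ← Finset.sum_add_distrib]
    gcongr with P
    by_cases hK : P ∈ B K <;> by_cases hK1 : P ∈ B (K + 1) <;> simp [hK, hK1]

lemma ENNReal.le_of_forall_le_add_ofReal_mul_pow {x y : ℝ≥0∞} {D r : ℝ} (hr0 : 0 ≤ r)
    (hr1 : r < 1) (h : ∀ J : ℕ, x ≤ y + ENNReal.ofReal (D * r ^ J)) : x ≤ y := by
  have hlim : Filter.Tendsto (fun J : ℕ => y + ENNReal.ofReal (D * r ^ J)) Filter.atTop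
      (nhds (y + ENNReal.ofReal (D * 0))) :=
    tendsto_const_nhds.add (ENNReal.tendsto_ofReal
      ((_root_.tendsto_pow_atTop_nhds_zero_of_lt_one hr0 hr1).const_mul D))
  rw [mul_zero, ENNReal.ofReal_zero, add_zero] at hlim
  exact ge_of_tendsto' hlim h

lemma two_rpow_neg_le_one_sub_div_two {x : ℝ} (hx0 : 0 ≤ x) (hx1 : x ≤ 1) :
    (2 : ℝ) ^ (-x) ≤ 1 - x / 2 := by
  have := Real.geom_mean_le_arith_mean2_weighted hx0 (sub_nonneg.2 hx1)
    (by norm_num : (0 : ℝ) ≤ 2⁻¹) zero_le_one (add_sub_cancel x 1)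
  rw [Real.one_rpow, mul_one, Real.inv_rpow zero_le_two, ← Real.rpow_neg zero_le_two] at this
  linarith

lemma sum_range_two_rpow_neg_pow_le {x N : ℝ} (hx : 0 < x) (hxN : x ≤ N) (hN : 1 ≤ N) (K : ℕ) :
    ∑ k ∈ Finset.range K, ((2 : ℝ) ^ (-x)) ^ k ≤ 2 * N / x := by
  have hr : (2 : ℝ) ^ (-x) < 1 := Real.rpow_lt_one_of_one_lt_of_neg one_lt_two (by linarith)
  have hgap : x / (2 * N) ≤ 1 - (2 : ℝ) ^ (-x) := by
    rcases le_total x 1 with hx1 | hx1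
    · have := two_rpow_neg_le_one_sub_div_two hx.le hx1
      have : x / (2 * N) ≤ x / 2 := div_le_div_of_nonneg_left hx.le two_pos (by linarith)
      linarith
    · have : (2 : ℝ) ^ (-x) ≤ 2 ^ (-1 : ℝ) :=
        Real.rpow_le_rpow_of_exponent_le one_le_two (by linarith)
      rw [div_le_iff₀ (by positivity)]
      norm_num at this
      nlinarith
  calc ∑ k ∈ Finset.range K, ((2 : ℝ) ^ (-x)) ^ k ≤ 1 / (1 - (2 : ℝ) ^ (-x)) := by
        have := geom_sum_Ico_le_of_lt_one (m := 0) (n := K) (by positivity) hr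
        rwa [← Finset.range_eq_Ico, pow_zero] at this
    _ ≤ 1 / (x / (2 * N)) := one_div_le_one_div_of_le (by positivity) hgap
    _ = 2 * N / x := by rw [one_div_div]

lemma sum_range_ofReal_mul_two_rpow_neg_pow_le {A x N : ℝ} (hA : 0 ≤ A) (hx : 0 < x)
    (hxN : x ≤ N) (hN : 1 ≤ N) (K : ℕ) :
    ∑ k ∈ Finset.range K, ENNReal.ofReal (A * ((2 : ℝ) ^ (-x)) ^ k) ≤
      ENNReal.ofReal (A * (2 * N / x)) := by
  rw [← ENNReal.ofReal_sum_of_nonneg fun k _ => by positivity, ← Finset.mul_sum]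
  exact ENNReal.ofReal_le_ofReal
    (mul_le_mul_of_nonneg_left (sum_range_two_rpow_neg_pow_le hx hxN hN K) hA)

lemma four_mul_div_two_pow_mul_rpow {t a δ : ℝ} (ht : 0 < t) (k : ℕ) :
    4 * t / 2 ^ k * (2 * (t / 2 ^ k) ^ (-a⁻¹) * t ^ δ) =
      8 * t ^ (1 - a⁻¹ + δ) * ((2 : ℝ) ^ (-(1 - a⁻¹))) ^ k := by
  rw [neg_sub, Real.rpow_sub_one two_ne_zero, Real.div_rpow ht.le (by positivity),
    ← Real.rpow_pow_comm zero_le_two, Real.rpow_add ht, Real.rpow_sub ht, Real.rpow_one,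
    Real.rpow_neg ht.le, Real.rpow_neg zero_le_two, div_pow, inv_pow]
  have : (0 : ℝ) < 2 ^ a⁻¹ := by positivity
  field_simp
  ring

lemma mul_two_pow_succ_rpow_mul_le {c e σ : ℝ} (hc : 1 ≤ c) (he : e ≤ 1) (n : ℕ) :
    (c * 2 ^ (n + 1)) ^ e * ((2 : ℝ) ^ (-σ)) ^ n ≤ 2 * c * ((2 : ℝ) ^ (e - σ)) ^ n := by
  rw [show c * 2 ^ (n + 1) = 2 * c * 2 ^ n by ring, Real.mul_rpow (by positivity) (by positivity),
    ← Real.rpow_pow_comm zero_le_two, mul_assoc, ← mul_pow, ← Real.rpow_add two_pos,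
    ← sub_eq_add_neg]
  gcongr
  simpa using Real.rpow_le_rpow_of_exponent_le (by linarith : (1 : ℝ) ≤ 2 * c) he

lemma prod_mul_two_rpow_neg_pow {κ : Type*} (s : Finset κ) (c : ℝ) (y : κ → ℝ) (n : ℕ) :
    ∏ j ∈ s, c * ((2 : ℝ) ^ (-y j)) ^ n = c ^ s.card * ((2 : ℝ) ^ (-∑ j ∈ s, y j)) ^ n := by
  rw [Finset.prod_mul_distrib, Finset.prod_const, Finset.prod_pow, ← Finset.sum_neg_distrib,
    Real.rpow_sum_of_pos two_pos]

section Decomposition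

variable {X : Type*} [Fintype X] {𝒯 : Set (Set X)} {top : Set X → ℝ≥0∞} {Jvol : ℝ≥0∞}

local notation "μ" => outerMeasureOf 𝒯 top Jvol

lemma exists_dyadic_peeling (htop : ∀ T ∈ 𝒯, top T ≠ 0) (hJ : Jvol ≠ ∞)
    {s : (X → ℝ≥0∞) → Set X → ℝ≥0∞} {G : X → ℝ≥0∞} {a δ : ℝ} (ha : 0 < a) (hδ : 0 ≤ δ)
    (hG : ∀ A, outerLorentz μ 𝒯 s (A.indicator G) (ENNReal.ofReal a) ∞ ≤ μ A ^ δ)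
    {B : Set X} {t₀ : ℝ} (ht₀ : 0 < t₀) (hB : μ B ≤ ENNReal.ofReal t₀) :
    ∃ (Bk : ℕ → Set X) (K : ℕ), Bk 0 = B ∧ Bk K = ∅ ∧ ∀ k, Bk k ⊆ B ∧
      μ (Bk k) ≤ ENNReal.ofReal (4 * t₀ / 2 ^ k) ∧
      outSup 𝒯 s ((Bk k \ Bk (k + 1)).indicator G) ≤
        ENNReal.ofReal (2 * (t₀ / 2 ^ k) ^ (-a⁻¹) * t₀ ^ δ) := by
  have hext : ∀ A ⊆ B, ∀ k : ℕ, ∃ C, μ C ≤ 2 * ENNReal.ofReal (t₀ / 2 ^ k) ∧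
      outSup 𝒯 s ((A \ C).indicator G) ≤
        ENNReal.ofReal (2 * (t₀ / 2 ^ k) ^ (-a⁻¹) * t₀ ^ δ) := by
    intro A hA k
    have hGA : outerLorentz μ 𝒯 s (A.indicator G) (ENNReal.ofReal a) ∞ ≤
        ENNReal.ofReal (t₀ ^ δ) := by
      rw [← ENNReal.ofReal_rpow_of_nonneg ht₀.le hδ]
      exact (hG A).trans (ENNReal.rpow_le_rpow ((outerMeasureOf_mono hA).trans hB) hδ)
    obtain ⟨C, hC, hCG⟩ := exists_outSup_compl_le_of_outerLorentz_le (by positivity) hGA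
      (by positivity : 0 < t₀ / 2 ^ k)
    rw [Set.indicator_indicator, Set.inter_comm, ← Set.sdiff_eq,
      ENNReal.toReal_ofReal ha.le] at hCG
    exact ⟨C, hC, hCG⟩
  choose! C hCμ hCG using hext
  let Bk : ℕ → Set X := fun k => Nat.rec B (fun k A => A ∩ C A k) k
  have hBk : ∀ k, Bk k ⊆ B := fun k => by
    induction k with
    | zero => exact subset_rfl
    | succ k ih => exact Set.inter_subset_left.trans ih
  have hμBk : ∀ k, μ (Bk k) ≤ ENNReal.ofReal (4 * t₀ / 2 ^ k) := by
    rintro (_ | k)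
    · exact hB.trans (ENNReal.ofReal_le_ofReal (by norm_num; linarith))
    · refine (outerMeasureOf_mono Set.inter_subset_right).trans ((hCμ _ (hBk k) k).trans ?_)
      rw [← ENNReal.ofReal_ofNat, ← ENNReal.ofReal_mul zero_le_two, pow_succ]
      exact ENNReal.ofReal_le_ofReal (le_of_eq (by field_simp; ring))
  obtain ⟨K, hK⟩ := exists_eq_empty_of_outerMeasureOf_le_div_two_pow htop hJ Bk _ hμBk
  refine ⟨Bk, K, rfl, hK, fun k => ⟨hBk k, hμBk k, ?_⟩⟩
  rw [show Bk k \ Bk (k + 1) = Bk k \ C (Bk k) k from Set.sdiff_self_inter]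
  exact hCG _ (hBk k) k

variable {κ : Type*} [Fintype κ] [DecidableEq κ] {ι : X → ℝ≥0∞}
  {sj : κ → (X → ℝ≥0∞) → Set X → ℝ≥0∞}

theorem sum_indicator_div_le_of_outerMeasureOf_le
    (htop : ∀ T ∈ 𝒯, top T ≠ 0 ∧ top T ≠ ∞) (hcov : ∀ x : X, ∃ T ∈ 𝒯, x ∈ T) (hJ : Jvol ≠ ∞)
    (hs : ∀ j, IsSize (sj j))
    (hHolder : ∀ (G : κ → X → ℝ≥0∞), ∀ T ∈ 𝒯,
      size1 ι top (fun x => ∏ j, G j x) T ≤ ∏ j, sj j (G j) T)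
    (i0 : κ) (F : κ → X → ℝ≥0∞) {a δ : ℝ} (ha : 1 < a) (hδ : 0 ≤ δ)
    (hF0 : ∀ A, outerLorentz μ 𝒯 (sj i0) (A.indicator (F i0)) (ENNReal.ofReal a) ∞ ≤ μ A ^ δ)
    {B : Set X} {t₀ : ℝ} (ht₀ : 0 < t₀) (hB : μ B ≤ ENNReal.ofReal t₀)
    {u : κ → ℝ} (hu0 : ∀ j, 0 ≤ u j)
    (hu : ∀ j ≠ i0, outSup 𝒯 (sj j) (B.indicator (F j)) ≤ ENNReal.ofReal (u j)) :
    (∑ P, B.indicator (fun P => ι P * ∏ j, F j P) P) / Jvol ≤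
      ENNReal.ofReal (16 * a / (a - 1) * t₀ ^ (1 - a⁻¹ + δ) *
        ∏ j ∈ Finset.univ.erase i0, u j) := by
  obtain ⟨Bk, K, rfl, hBK, hBk⟩ := exists_dyadic_peeling (fun T hT => (htop T hT).1) hJ
    (by linarith) hδ hF0 ht₀ hB
  have ha' : 0 < 1 - a⁻¹ := sub_pos.2 (inv_lt_one_of_one_lt₀ ha)
  have hU : 0 ≤ ∏ j ∈ Finset.univ.erase i0, u j := Finset.prod_nonneg fun j _ => hu0 j
  have hpiece : ∀ k, (∑ P, (Bk k \ Bk (k + 1)).indicator (fun P => ι P * ∏ j, F j P) P) / Jvol ≤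
      ENNReal.ofReal (8 * t₀ ^ (1 - a⁻¹ + δ) * (∏ j ∈ Finset.univ.erase i0, u j) *
        ((2 : ℝ) ^ (-(1 - a⁻¹))) ^ k) := by
    intro k
    obtain ⟨-, hμ, hF⟩ := hBk k
    have hD : Bk k \ Bk (k + 1) ⊆ Bk 0 := Set.sdiff_subset.trans (hBk k).1
    refine (sum_indicator_div_le_outerMeasureOf_mul_prod_outSup htop hcov hHolder F _).trans ?_
    rw [← Finset.mul_prod_erase _ _ (Finset.mem_univ i0), mul_right_comm (8 * _),
      ← four_mul_div_two_pow_mul_rpow ht₀, ENNReal.ofReal_mul (by positivity),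
      ENNReal.ofReal_mul (by positivity), mul_assoc, ENNReal.ofReal_prod_of_nonneg fun j _ => hu0 j]
    gcongr with j hj
    · exact (outerMeasureOf_mono Set.sdiff_subset).trans hμ
    · exact (outSup_indicator_mono (hs j) hD).trans (hu j (Finset.ne_of_mem_erase hj))
  calc (∑ P, (Bk 0).indicator (fun P => ι P * ∏ j, F j P) P) / Jvol
      ≤ ∑ k ∈ Finset.range K,
          (∑ P, (Bk k \ Bk (k + 1)).indicator (fun P => ι P * ∏ j, F j P) P) / Jvol := by
        simpa [hBK] using sum_indicator_div_le_sum_sdiff_add Bk _ Jvol K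
    _ ≤ _ := (Finset.sum_le_sum fun k _ => hpiece k).trans
        (sum_range_ofReal_mul_two_rpow_neg_pow_le (by positivity) ha'
          (by linarith [inv_pos.2 (zero_lt_one.trans ha)]) le_rfl K)
    _ = _ := by
        have : a - 1 ≠ 0 := by linarith
        congr 1
        field_simp
        ring

end Decomposition

lemma sum_div_le_of_layers {X : Type*} [Fintype X] {W : ℕ → Set X} (hW0 : W 0 = Set.univ)
    (g : X → ℝ≥0∞) {c S : ℝ≥0∞} {D r : ℝ} (hr0 : 0 ≤ r) (hr1 : r < 1)
    (hlayers : ∀ J, ∑ n ∈ Finset.range J, (∑ P, (W n \ W (n + 1)).indicator g P) / c ≤ S)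
    (hrest : ∀ J, (∑ P, (W J).indicator g P) / c ≤ ENNReal.ofReal (D * r ^ J)) :
    (∑ P, g P) / c ≤ S := by
  refine ENNReal.le_of_forall_le_add_ofReal_mul_pow (D := D) hr0 hr1 fun J => ?_
  have := sum_indicator_div_le_sum_sdiff_add W g c J
  rw [hW0, Set.indicator_univ] at this
  exact this.trans (add_le_add (hlayers J) (hrest J))

section Layers

variable {X : Type*} {𝒯 : Set (Set X)} {top : Set X → ℝ≥0∞} {Jvol : ℝ≥0∞}
  {κ : Type*} [Fintype κ] [DecidableEq κ] {sj : κ → (X → ℝ≥0∞) → Set X → ℝ≥0∞}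

local notation "μ" => outerMeasureOf 𝒯 top Jvol

lemma exists_layers (hs : ∀ j, IsSize (sj j)) (i0 : κ) (F : κ → X → ℝ≥0∞) {p : κ → ℝ}
    (hp : ∀ j, 1 ≤ p j)
    (hF : ∀ j ≠ i0, outerLorentz μ 𝒯 (sj j) (F j) (ENNReal.ofReal (p j)) ∞ ≤ 1 ∧
      outSup 𝒯 (sj j) (F j) ≤ 1) :
    ∃ W : ℕ → Set X, W 0 = Set.univ ∧
      (∀ n, μ (W n \ W (n + 1)) ≤ ENNReal.ofReal (Fintype.card κ * 2 ^ (n + 1))) ∧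
      ∀ n, ∀ j ≠ i0, outSup 𝒯 (sj j) ((W n).indicator (F j)) ≤
        ENNReal.ofReal (4 * ((2 : ℝ) ^ (-(p j)⁻¹)) ^ n) := by
  have hE : ∀ j n, j ≠ i0 → ∃ E, μ E ≤ 2 * ENNReal.ofReal (2 ^ n) ∧
      outSup 𝒯 (sj j) (Eᶜ.indicator (F j)) ≤
        ENNReal.ofReal (2 * ((2 : ℝ) ^ n) ^ (-(ENNReal.ofReal (p j)).toReal⁻¹) * 1) :=
    fun j n hj => exists_outSup_compl_le_of_outerLorentz_le one_pos
      (by simpa using (hF j hj).1) (by positivity)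
  choose! E hEμ hEF using hE
  set Ω : ℕ → Set X := fun n => ⋃ j ∈ Finset.univ.erase i0, E j n
  set W : ℕ → Set X := fun n => Nat.rec Set.univ (fun k _ => (Ω k)ᶜ) n
  refine ⟨W, rfl, fun n => ?_, ?_⟩
  · have hsub : W n \ W (n + 1) ⊆ Ω n := fun x hx => not_not.1 hx.2
    refine (outerMeasureOf_mono hsub).trans ((outerMeasureOf_biUnion_le _ _).trans ?_)
    calc ∑ j ∈ Finset.univ.erase i0, μ (E j n)
        ≤ ∑ _j ∈ Finset.univ.erase i0, ENNReal.ofReal (2 ^ (n + 1)) := by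
          refine Finset.sum_le_sum fun j hj => (hEμ j n (Finset.ne_of_mem_erase hj)).trans ?_
          rw [← ENNReal.ofReal_ofNat, ← ENNReal.ofReal_mul zero_le_two, pow_succ, mul_comm]
      _ ≤ ENNReal.ofReal (Fintype.card κ * 2 ^ (n + 1)) := by
          rw [Finset.sum_const, nsmul_eq_mul, ENNReal.ofReal_mul (by positivity),
            ENNReal.ofReal_natCast]
          gcongr
          exact Finset.card_le_univ _
  · rintro (_ | n) j hj
    · show outSup 𝒯 (sj j) (Set.univ.indicator (F j)) ≤ _
      rw [Set.indicator_univ, pow_zero, mul_one]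
      exact (hF j hj).2.trans (by norm_num)
    · refine (outSup_indicator_mono (hs j) ?_).trans ((hEF j n hj).trans ?_)
      · exact Set.compl_subset_compl.2 fun x hx =>
          Set.mem_biUnion (Finset.mem_erase.2 ⟨hj, Finset.mem_univ j⟩) hx
      · have hpj : (2 : ℝ)⁻¹ ≤ (2 : ℝ) ^ (-(p j)⁻¹) := by
          rw [← Real.rpow_neg_one]
          exact Real.rpow_le_rpow_of_exponent_le one_le_two
            (neg_le_neg (inv_le_one_of_one_le₀ (hp j)))
        rw [ENNReal.toReal_ofReal (zero_le_one.trans (hp j)), ← Real.rpow_pow_comm zero_le_two,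
          pow_succ]
        refine ENNReal.ofReal_le_ofReal ?_
        have := pow_nonneg (Real.rpow_nonneg zero_le_two (-(p j)⁻¹)) n
        nlinarith

end Layers

section Main

variable {X : Type*} [Fintype X] {𝒯 : Set (Set X)} {top : Set X → ℝ≥0∞} {Jvol : ℝ≥0∞}
  {κ : Type*} [Fintype κ] [DecidableEq κ] {ι : X → ℝ≥0∞}
  {sj : κ → (X → ℝ≥0∞) → Set X → ℝ≥0∞}

local notation "μ" => outerMeasureOf 𝒯 top Jvol

theorem sum_mul_prod_div_le
    (htop : ∀ T ∈ 𝒯, top T ≠ 0 ∧ top T ≠ ∞) (hcov : ∀ x : X, ∃ T ∈ 𝒯, x ∈ T)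
    (hJ0 : Jvol ≠ 0) (hJ : Jvol ≠ ∞) (hs : ∀ j, IsSize (sj j))
    (hHolder : ∀ (G : κ → X → ℝ≥0∞), ∀ T ∈ 𝒯,
      size1 ι top (fun x => ∏ j, G j x) T ≤ ∏ j, sj j (G j) T)
    (i0 : κ) (F : κ → X → ℝ≥0∞) {a : ℝ} {p : κ → ℝ} (ha : 1 < a) (hap : a ≤ p i0)
    (hp : ∀ j, 1 ≤ p j) (hε : 0 < ∑ j, (p j)⁻¹ - 1)
    (hF0 : ∀ A, outerLorentz μ 𝒯 (sj i0) (A.indicator (F i0)) (ENNReal.ofReal a) ∞ ≤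
      μ A ^ (a⁻¹ - (p i0)⁻¹))
    (hF : ∀ j ≠ i0, outerLorentz μ 𝒯 (sj j) (F j) (ENNReal.ofReal (p j)) ∞ ≤ 1 ∧
      outSup 𝒯 (sj j) (F j) ≤ 1) :
    (∑ P, ι P * ∏ j, F j P) / Jvol ≤
      ENNReal.ofReal (64 * Fintype.card κ ^ 2 * 4 ^ (Fintype.card κ - 1) * a /
        ((∑ j, (p j)⁻¹ - 1) * (a - 1))) := by
  obtain ⟨W, hW0, hWμ, hWF⟩ := exists_layers hs i0 F hp hF
  set ε := ∑ j, (p j)⁻¹ - 1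
  set σ := ∑ j ∈ Finset.univ.erase i0, (p j)⁻¹ with hσ
  set c := Fintype.card κ with hc
  have hc1 : (1 : ℝ) ≤ c := Nat.one_le_cast.2 (Fintype.card_pos_iff.2 ⟨i0⟩)
  have hεc : ε ≤ c := by
    have := Finset.sum_le_card_nsmul Finset.univ _ 1 fun j _ => inv_le_one_of_one_le₀ (hp j)
    simp only [Finset.card_univ, nsmul_eq_mul, mul_one] at this
    linarith
  have hδ : 0 ≤ a⁻¹ - (p i0)⁻¹ := sub_nonneg.2 (inv_anti₀ (by linarith) hap)
  have hσε : 1 - a⁻¹ + (a⁻¹ - (p i0)⁻¹) = σ - ε := by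
    simp only [ε, σ, ← Finset.add_sum_erase _ _ (Finset.mem_univ i0)]
    ring
  have he : 0 < σ - ε ∧ σ - ε ≤ 1 := by
    have := inv_lt_one_of_one_lt₀ (ha.trans_le hap)
    constructor <;> linarith [inv_nonneg.2 (zero_le_one.trans (hp i0))]
  have hW : ∀ n (D : Set X) (t₀ : ℝ), 0 < t₀ → D ⊆ W n → μ D ≤ ENNReal.ofReal t₀ →
      (∑ P, D.indicator (fun P => ι P * ∏ j, F j P) P) / Jvol ≤
        ENNReal.ofReal (16 * a / (a - 1) * 4 ^ (c - 1) * t₀ ^ (σ - ε) * ((2 : ℝ) ^ (-σ)) ^ n) := by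
    intro n D t₀ ht₀ hDW hD
    refine (sum_indicator_div_le_of_outerMeasureOf_le htop hcov hJ hs hHolder i0 F ha hδ hF0 ht₀ hD
      (u := fun j => 4 * ((2 : ℝ) ^ (-(p j)⁻¹)) ^ n) (fun j => by positivity)
      fun j hj => (outSup_indicator_mono (hs j) hDW).trans (hWF n j hj)).trans (le_of_eq ?_)
    rw [prod_mul_two_rpow_neg_pow, Finset.card_erase_of_mem (Finset.mem_univ _), Finset.card_univ,
      hσε, ← hσ, ← hc]
    congr 1
    ring
  have hlayer : ∀ n, (∑ P, (W n \ W (n + 1)).indicator (fun P => ι P * ∏ j, F j P) P) / Jvol ≤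
      ENNReal.ofReal (32 * c * 4 ^ (c - 1) * a / (a - 1) * ((2 : ℝ) ^ (-ε)) ^ n) := by
    intro n
    refine (hW n _ _ (by positivity) Set.sdiff_subset (hWμ n)).trans (ENNReal.ofReal_le_ofReal ?_)
    have := mul_two_pow_succ_rpow_mul_le hc1 he.2 (σ := σ) n
    rw [sub_sub_cancel_left] at this
    calc _ = 16 * a / (a - 1) * 4 ^ (c - 1) *
            ((c * 2 ^ (n + 1)) ^ (σ - ε) * ((2 : ℝ) ^ (-σ)) ^ n) := by ring
      _ ≤ 16 * a / (a - 1) * 4 ^ (c - 1) * (2 * c * ((2 : ℝ) ^ (-ε)) ^ n) := by gcongr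
      _ = _ := by ring
  have hM := outerMeasureOf_lt_top (fun T hT => (htop T hT).2) hcov hJ0 (𝒯 := 𝒯) Set.univ
  refine sum_div_le_of_layers hW0 _ (by positivity : (0 : ℝ) ≤ 2 ^ (-σ))
    (Real.rpow_lt_one_of_one_lt_of_neg one_lt_two (by linarith))
    (fun J => ((Finset.sum_le_sum fun n _ => hlayer n).trans
      (sum_range_ofReal_mul_two_rpow_neg_pow_le (by positivity) hε hεc hc1 J)).trans_eq ?_)
    fun J => hW J _ ((μ Set.univ).toReal + 1) (by positivity) subset_rfl
      ((outerMeasureOf_mono (Set.subset_univ _)).trans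
        ((ENNReal.le_ofReal_iff_toReal_le hM.ne (by positivity)).2 (by linarith)))
  congr 1
  field_simp
  ring

end Main

/-- reverse-Hölder outer estimate, discrete core, normalized form:
under the normalizations `‖F₁‖_{X_a^{p₁,∞}} = 1`, `‖F_ℓ‖_{L^{p_ℓ,∞}} ≤ 1`,
`‖F_ℓ‖_{L^∞} ≤ 1` for `2 ≤ ℓ ≤ m`, with `1 < a ≤ p₁`, `1 ≤ p_ℓ`,
`ε = (Σ 1/p_ℓ) - 1 > 0`, and the submultiplicative Hölder condition with `s = size₁`,
one has `(1/|J|) Σ_P |I_P| |F₁ ⋯ F_m(P)| ≤ C_m · a/(ε(a-1))`. -/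
theorem stmt8 (m : ℕ) (hm : 2 ≤ m) :
    ∃ C : ℝ, 0 < C ∧
      ∀ (X : Type) (_ : Fintype X) (𝒯 : Set (Set X)) (top : Set X → ℝ≥0∞)
        (Jvol : ℝ≥0∞), 0 < Jvol → Jvol < ∞ →
        ∀ (ι : X → ℝ≥0∞),
        (∀ T ∈ 𝒯, 0 < top T ∧ top T < ∞) →
        (∀ x : X, ∃ T ∈ 𝒯, x ∈ T) →
        ∀ (sj : Fin m → (X → ℝ≥0∞) → Set X → ℝ≥0∞), (∀ j, IsSize (sj j)) →
        ∀ (a p₁ : ℝ) (pj : Fin m → ℝ),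
          1 < a → a ≤ p₁ → pj ⟨0, by omega⟩ = p₁ → (∀ j, 1 ≤ pj j) →
        ∀ ε : ℝ, ε = (∑ j, (pj j)⁻¹) - 1 → 0 < ε →
        (∀ (G : Fin m → X → ℝ≥0∞), ∀ T ∈ 𝒯,
          size1 ι top (fun x => ∏ j, G j x) T ≤ ∏ j, sj j (G j) T) →
        ∀ (F : Fin m → X → ℝ≥0∞),
          xNorm (outerMeasureOf 𝒯 top Jvol) 𝒯 (sj ⟨0, by omega⟩) (F ⟨0, by omega⟩)
            (ENNReal.ofReal a) (ENNReal.ofReal p₁) = 1 →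
          (∀ j : Fin m, j ≠ ⟨0, by omega⟩ →
            outerLorentz (outerMeasureOf 𝒯 top Jvol) 𝒯 (sj j) (F j)
              (ENNReal.ofReal (pj j)) ∞ ≤ 1 ∧ outSup 𝒯 (sj j) (F j) ≤ 1) →
          Jvol⁻¹ * ∑ P : X, ι P * ∏ j, F j P ≤
            ENNReal.ofReal (C * a / (ε * (a - 1))) := by
  refine ⟨64 * m ^ 2 * 4 ^ (m - 1), by positivity, ?_⟩
  intro X _ 𝒯 top Jvol hJ0 hJ ι htop hcov sj hs a p₁ pj ha hap hp₁ hpj ε hε hε0 hHolder F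
    hxNorm hF
  subst hp₁ hε
  have hF0 := outerLorentz_indicator_le_of_xNorm_le_one hxNorm.le
  rw [ENNReal.toReal_ofReal (by linarith), ENNReal.toReal_ofReal (by linarith)] at hF0
  have h := sum_mul_prod_div_le (fun T hT => ⟨(htop T hT).1.ne', (htop T hT).2.ne⟩) hcov hJ0.ne'
    hJ.ne hs hHolder _ F ha hap hpj hε0 hF0 hF
  rwa [ENNReal.div_eq_inv_mul, Fintype.card_fin] at h
end

section
/- (Sparse-to-weak-type implication with sharp constant) Suppose a sublinear operator C on ℝ satisfies the (p,1)-sparse bound |⟨Cf, g⟩| ≤ A·‖M_{(p,1)}(f,g)‖₁ for all bounded compactly supported f, g, where M_{(p,1)}(f,g) = sup_Q 1_Q·⟨f⟩_{p,Q}⟨g⟩_{1,Q}. Then ‖Cf‖_{L^{p,∞}} ≤ C₀·A·‖f‖_p (unweighted weak-type), with C₀ absolute, for 1 < p ≤ 2. [Simplified version: the sparse form bound with exponents (p,1) implies the weak-type (p,p) estimate with comparable constant.] -/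
open MeasureTheory ENNReal

/-- The weak `L^p` quasinorm `‖g‖_{L^{p,∞}(μ)} = sup_{t>0} t · μ({|g| > t})^{1/p}`. -/
noncomputable def weakNorm {α : Type*} [MeasurableSpace α] (μ : Measure α)
    (g : α → ℂ) (p : ℝ) : ℝ≥0∞ :=
  ⨆ (t : ℝ) (_ : 0 < t), ENNReal.ofReal t * μ {x | t < ‖g x‖} ^ (1 / p)

/-- The local `L^r` average `⟨f⟩_{r,(a,b)}`. -/
noncomputable def avgq (r : ℝ) (a b : ℝ) (f : ℝ → ℂ) : ℝ≥0∞ :=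
  ((ENNReal.ofReal (b - a))⁻¹ * ∫⁻ x in Set.Ioo a b, (‖f x‖₊ : ℝ≥0∞) ^ r) ^ r⁻¹

/-- The bilinear maximal function `M_{(p,1)}(f,g) = sup_Q 1_Q ⟨f⟩_{p,Q} ⟨g⟩_{1,Q}`. -/
noncomputable def bimax (p : ℝ) (f g : ℝ → ℂ) (x : ℝ) : ℝ≥0∞ :=
  ⨆ (a : ℝ) (b : ℝ) (_ : a < b) (_ : x ∈ Set.Ioo a b), avgq p a b f * avgq 1 a b g

/-- Bounded, compactly supported, measurable functions. -/
def Nice (f : ℝ → ℂ) : Prop :=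
  Measurable f ∧ (∃ B, ∀ x, ‖f x‖ ≤ B) ∧ ∃ R, ∀ x, R < |x| → f x = 0

/-!
Fix `t > 0` and a bounded set `E` on which `Tf` is bounded and `t < |Tf|`. With
`L ^ p = 8 ‖f‖_p ^ p / |E|`, the weak type `(1, 1)` bound for the maximal function shows that
`G = {M(|f| ^ p) > L ^ p}` has measure at most `|E| / 2`, so `E' = E \ G` keeps half of `E`.
Testing the sparse bound against `g = 1_{E'} · conj (Tf) / |Tf|` gives
`t |E'| ≤ A ∫ M_{(p,1)}(f, g)`. Every interval meeting `E'` has `⟨f⟩_{p,Q} ≤ L`, so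
`M_{(p,1)}(f, g) ≤ L`; together with `M_{(p,1)}(f, g) ≤ M(|f| ^ p) ^ (1/p) · M g` and a dyadic
layer-cake decomposition of the levels below `L` this gives `∫ M_{(p,1)}(f, g) ≲ L |E|` when
`p ≤ 2`. Hence `t ≲ A L`, that is, `t ^ p |E| ≲ A ^ p ‖f‖_p ^ p`, and exhausting `{|Tf| > t}` by
such sets `E` gives the weak type bound.
-/

open Set Metric

noncomputable def maximalFunction (u : ℝ → ℝ≥0∞) (x : ℝ) : ℝ≥0∞ :=
  ⨆ (a : ℝ) (b : ℝ) (_ : x ∈ Ioo a b), (ENNReal.ofReal (b - a))⁻¹ * ∫⁻ y in Ioo a b, u y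

theorem le_maximalFunction (u : ℝ → ℝ≥0∞) {a b x : ℝ} (hx : x ∈ Ioo a b) :
    (ENNReal.ofReal (b - a))⁻¹ * ∫⁻ y in Ioo a b, u y ≤ maximalFunction u x :=
  le_iSup₂_of_le a b <| le_iSup_of_le hx le_rfl

theorem isOpen_lt_maximalFunction (u : ℝ → ℝ≥0∞) (r : ℝ≥0∞) :
    IsOpen {x | r < maximalFunction u x} := by
  refine isOpen_iff_forall_mem_open.2 fun x hx => ?_
  simp only [mem_ofPred_eq, maximalFunction, lt_iSup_iff] at hx
  obtain ⟨a, b, hxab, hlt⟩ := hx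
  exact ⟨Ioo a b, fun y hy => hlt.trans_le (le_maximalFunction u hy), isOpen_Ioo, hxab⟩

theorem maximalFunction_eq_zero {u : ℝ → ℝ≥0∞} (hu : ∫⁻ y, u y = 0) (x : ℝ) :
    maximalFunction u x = 0 := by
  simp only [maximalFunction, ENNReal.iSup_eq_zero]
  intro a b _
  have : ∫⁻ y in Ioo a b, u y = 0 := le_antisymm (hu ▸ setLIntegral_le_lintegral _ _) zero_le
  rw [this, mul_zero]

theorem exists_ball_of_lt_maximalFunction {u : ℝ → ℝ≥0∞} {r : ℝ≥0∞} {x : ℝ}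
    (hx : r < maximalFunction u x) :
    ∃ c ρ : ℝ, x ∈ ball c ρ ∧ r * volume (ball c ρ) < ∫⁻ y in ball c ρ, u y := by
  simp only [maximalFunction, lt_iSup_iff] at hx
  obtain ⟨a, b, hxab, hlt⟩ := hx
  have hball : ball ((a + b) / 2) ((b - a) / 2) = Ioo a b := by
    rw [Real.ball_eq_Ioo]; congr 1 <;> ring
  refine ⟨(a + b) / 2, (b - a) / 2, hball ▸ hxab, ?_⟩
  have hlen : volume (Ioo a b) ≠ 0 := by
    rw [Real.volume_Ioo, ne_eq, ENNReal.ofReal_eq_zero, not_le, sub_pos]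
    exact hxab.1.trans hxab.2
  rw [hball, ← ENNReal.lt_div_iff_mul_lt (Or.inl hlen) (Or.inl measure_Ioo_lt_top.ne),
    ENNReal.div_eq_inv_mul, Real.volume_Ioo]
  exact hlt

theorem mul_volume_lt_maximalFunction_le (u : ℝ → ℝ≥0∞) (r : ℝ≥0∞) :
    r * volume {x | r < maximalFunction u x} ≤ 4 * ∫⁻ y, u y := by
  set S := {x | r < maximalFunction u x}
  rcases eq_or_ne r 0 with rfl | hr0
  · simp
  rcases eq_or_ne (∫⁻ y, u y) ⊤ with hU | hU
  · simp [hU]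
  choose! c ρ hmem hlt using fun x (hx : x ∈ S) => exists_ball_of_lt_maximalFunction hx
  have hρ : ∀ x ∈ S, ρ x ≤ ((∫⁻ y, u y) / r).toReal := by
    intro x hx
    have hpos : 0 < ρ x := pos_of_mem_ball (hmem x hx)
    have hvol : r * volume (ball (c x) (ρ x)) ≤ ∫⁻ y, u y :=
      (hlt x hx).le.trans (setLIntegral_le_lintegral _ _)
    rw [mul_comm, ← ENNReal.le_div_iff_mul_le (Or.inl hr0) (Or.inr hU), Real.volume_ball,
      ENNReal.ofReal_le_iff_le_toReal (ENNReal.div_ne_top hU hr0)] at hvol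
    linarith
  obtain ⟨V, hVS, hdisj, hcov⟩ :=
    Vitali.exists_disjoint_subfamily_covering_enlargement_ball S c ρ _ hρ 4 (by norm_num)
  have hV : V.Countable := hdisj.countable_of_isOpen (fun _ _ => isOpen_ball)
    fun x hx => ⟨x, hmem x (hVS hx)⟩
  have hSV : S ⊆ ⋃ x ∈ V, ball (c x) (4 * ρ x) := fun x hx => by
    obtain ⟨y, hy, hsub⟩ := hcov x hx
    exact mem_biUnion hy (hsub (hmem x hx))
  calc r * volume S ≤ r * ∑' x : V, volume (ball (c x) (4 * ρ x)) := by
        gcongr; exact (measure_mono hSV).trans (measure_biUnion_le _ hV _)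
    _ = 4 * ∑' x : V, r * volume (ball (c x) (ρ x)) := by
        rw [← ENNReal.tsum_mul_left, ← ENNReal.tsum_mul_left]
        congr 1; ext x
        rw [Real.volume_ball, Real.volume_ball, mul_left_comm 2, ENNReal.ofReal_mul (by norm_num),
          ENNReal.ofReal_ofNat, mul_left_comm]
    _ ≤ 4 * ∑' x : V, ∫⁻ y in ball (c x) (ρ x), u y := by
        gcongr with x; exact (hlt x (hVS x.2)).le
    _ = 4 * ∫⁻ y in ⋃ x ∈ V, ball (c x) (ρ x), u y := by
        rw [lintegral_biUnion hV (fun _ _ => measurableSet_ball) hdisj]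
    _ ≤ 4 * ∫⁻ y, u y := mul_le_mul_right (setLIntegral_le_lintegral _ _) 4

theorem volume_lt_maximalFunction_le (u : ℝ → ℝ≥0∞) (m : ℝ≥0∞) :
    volume {x | 4 * (∫⁻ y, u y) / m < maximalFunction u x} ≤ m := by
  set r := 4 * (∫⁻ y, u y) / m
  rcases eq_or_ne (∫⁻ y, u y) 0 with hU | hU
  · simp [maximalFunction_eq_zero hU]
  rcases eq_or_ne m ⊤ with rfl | hm
  · exact le_top
  rcases eq_or_ne r ⊤ with hr | hr
  · simp [hr]
  have hm0 : m ≠ 0 := by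
    rintro rfl
    exact hr (ENNReal.div_zero (mul_ne_zero (by norm_num) hU))
  have hr0 : r ≠ 0 := ENNReal.div_ne_zero.2 ⟨mul_ne_zero (by norm_num) hU, hm⟩
  rw [← ENNReal.mul_le_mul_iff_right hr0 hr, ENNReal.div_mul_cancel hm0 hm]
  exact mul_volume_lt_maximalFunction_le u r

theorem avgq_le_maximalFunction {p : ℝ} (hp : 0 ≤ p) (f : ℝ → ℂ) {a b x : ℝ}
    (hx : x ∈ Ioo a b) : avgq p a b f ≤ maximalFunction (fun y => ‖f y‖ₑ ^ p) x ^ p⁻¹ :=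
  ENNReal.rpow_le_rpow (le_maximalFunction _ hx) (inv_nonneg.2 hp)

theorem avgq_one (a b : ℝ) (g : ℝ → ℂ) :
    avgq 1 a b g = (ENNReal.ofReal (b - a))⁻¹ * ∫⁻ y in Ioo a b, ‖g y‖ₑ := by
  simp [avgq, enorm_eq_nnnorm]

theorem bimax_le_mul_maximalFunction {p : ℝ} (hp : 0 ≤ p) (f g : ℝ → ℂ) (x : ℝ) :
    bimax p f g x ≤
      maximalFunction (fun y => ‖f y‖ₑ ^ p) x ^ p⁻¹ * maximalFunction (fun y => ‖g y‖ₑ) x :=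
  iSup₂_le fun a b => iSup₂_le fun _ hx =>
    mul_le_mul' (avgq_le_maximalFunction hp f hx)
      ((avgq_one a b g).trans_le (le_maximalFunction _ hx))

theorem measurable_bimax (p : ℝ) (f g : ℝ → ℂ) : Measurable (bimax p f g) := by
  refine measurable_of_Ioi fun s => IsOpen.measurableSet ?_
  refine isOpen_iff_forall_mem_open.2 fun x hx => ?_
  simp only [mem_preimage, mem_Ioi, bimax, lt_iSup_iff] at hx
  obtain ⟨a, b, hab, hxab, hlt⟩ := hx
  refine ⟨Ioo a b, fun y hy => ?_, isOpen_Ioo, hxab⟩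
  simp only [mem_preimage, mem_Ioi, bimax, lt_iSup_iff]
  exact ⟨a, b, hab, hy, hlt⟩

theorem bimax_le_of_maximalFunction_le {p : ℝ} (hp : 0 < p) {f g : ℝ → ℂ} {E : Set ℝ}
    (hE : MeasurableSet E) (hg : ∀ y, ‖g y‖ₑ ≤ E.indicator 1 y) {L : ℝ≥0∞}
    (hf : ∀ y ∈ E, maximalFunction (fun z => ‖f z‖ₑ ^ p) y ≤ L ^ p) (x : ℝ) :
    bimax p f g x ≤ L := by
  refine iSup₂_le fun a b => iSup₂_le fun _ hx => ?_
  have hg_int : ∫⁻ y in Ioo a b, ‖g y‖ₑ ≤ volume (E ∩ Ioo a b) := by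
    calc ∫⁻ y in Ioo a b, ‖g y‖ₑ ≤ ∫⁻ y in Ioo a b, E.indicator 1 y := lintegral_mono hg
      _ = volume (E ∩ Ioo a b) := by
        rw [lintegral_indicator_one hE, Measure.restrict_apply hE]
  rcases eq_or_ne (volume (E ∩ Ioo a b)) 0 with h0 | h0
  · have : ∫⁻ y in Ioo a b, ‖g y‖ₑ = 0 := le_antisymm (h0 ▸ hg_int) zero_le
    rw [avgq_one, this, mul_zero, mul_zero]
    exact zero_le
  obtain ⟨y, hyE, hy⟩ := nonempty_of_measure_ne_zero h0
  have hf_avg : avgq p a b f ≤ L :=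
    calc avgq p a b f ≤ maximalFunction (fun z => ‖f z‖ₑ ^ p) y ^ p⁻¹ :=
          avgq_le_maximalFunction hp.le f hy
      _ ≤ (L ^ p) ^ p⁻¹ := ENNReal.rpow_le_rpow (hf y hyE) (inv_nonneg.2 hp.le)
      _ = L := ENNReal.rpow_rpow_inv hp.ne' L
  have hg_avg : avgq 1 a b g ≤ 1 := by
    have hlen : ENNReal.ofReal (b - a) ≠ 0 := by
      rw [ne_eq, ENNReal.ofReal_eq_zero, not_le, sub_pos]; exact hx.1.trans hx.2
    calc avgq 1 a b g ≤ (ENNReal.ofReal (b - a))⁻¹ * volume (Ioo a b) := by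
          rw [avgq_one]; gcongr; exact hg_int.trans (measure_mono inter_subset_right)
      _ = 1 := by rw [Real.volume_Ioo, ENNReal.inv_mul_cancel hlen ENNReal.ofReal_ne_top]
  simpa using mul_le_mul' hf_avg hg_avg

theorem lt_bimax_subset {p : ℝ} (hp : 0 < p) (f g : ℝ → ℂ) (w c : ℝ≥0∞) :
    {x | w * c < bimax p f g x} ⊆
      {x | w ^ p < maximalFunction (fun y => ‖f y‖ₑ ^ p) x} ∪
        {x | c < maximalFunction (fun y => ‖g y‖ₑ) x} := by
  intro x hx
  by_contra hcon
  simp only [mem_union, mem_ofPred_eq, not_or, not_lt] at hcon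
  refine absurd hx (not_lt.2 ((bimax_le_mul_maximalFunction hp.le f g x).trans ?_))
  calc _ ≤ (w ^ p) ^ p⁻¹ * c := by gcongr; exacts [hcon.1, hcon.2]
    _ = w * c := by rw [ENNReal.rpow_rpow_inv hp.ne']

open Filter Topology in
theorem lintegral_le_tsum_mul_measure_lt {α : Type*} [MeasurableSpace α] (μ : Measure α)
    {h : α → ℝ≥0∞} (hh : Measurable h) {L q : ℝ≥0∞} (hL : L ≠ ⊤) (hq : q < 1)
    (hle : ∀ x, h x ≤ L) :
    ∫⁻ x, h x ∂μ ≤ ∑' k : ℕ, L * q ^ k * μ {x | L * q ^ (k + 1) < h x} := by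
  set S : ℕ → Set α := fun k => {x | L * q ^ (k + 1) < h x}
  have hS : ∀ k, MeasurableSet (S k) := fun k => measurableSet_lt measurable_const hh
  have hpt : ∀ x, h x ≤ ∑' k, (S k).indicator (fun _ => L * q ^ k) x := by
    intro x
    rcases eq_or_ne (h x) 0 with h0 | h0
    · simp [h0]
    have hlim : Tendsto (fun k : ℕ => L * q ^ (k + 1)) atTop (𝓝 0) := by
      simpa using ENNReal.Tendsto.const_mul
        ((ENNReal.tendsto_pow_atTop_nhds_zero_of_lt_one hq).comp (tendsto_add_atTop_nat 1))
        (Or.inr hL)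
    have hex : ∃ k, x ∈ S k := (hlim.eventually (gt_mem_nhds h0.bot_lt)).exists
    have hk : h x ≤ L * q ^ Nat.find hex := by
      rcases hk : Nat.find hex with _ | j
      · simpa using hle x
      · exact not_lt.1 (Nat.find_min hex (hk ▸ Nat.lt_succ_self j))
    calc h x ≤ (S (Nat.find hex)).indicator (fun _ => L * q ^ Nat.find hex) x := by
          rwa [indicator_of_mem (Nat.find_spec hex)]
      _ ≤ _ := ENNReal.le_tsum (f := fun k => (S k).indicator (fun _ => L * q ^ k) x) _
  calc ∫⁻ x, h x ∂μ ≤ ∫⁻ x, ∑' k, (S k).indicator (fun _ => L * q ^ k) x ∂μ := lintegral_mono hpt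
    _ = ∑' k : ℕ, L * q ^ k * μ (S k) := by
        rw [lintegral_tsum fun k => (measurable_const.indicator (hS k)).aemeasurable]
        simp_rw [lintegral_indicator_const (hS _)]

theorem mul_volume_lt_bimax_le_of_le {p : ℝ} (hp : 0 < p) {f g : ℝ → ℂ} {L m w c : ℝ≥0∞}
    (hL0 : L ≠ 0) (hL : L ≠ ⊤) (hwc : L ^ p * c ≤ w ^ p)
    (hf : 4 * ∫⁻ y, ‖f y‖ₑ ^ p ≤ m * L ^ p) (hg : ∫⁻ y, ‖g y‖ₑ ≤ m) :
    c * volume {x | w * c < bimax p f g x} ≤ 5 * m := by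
  have hf_level : c * volume {x | w ^ p < maximalFunction (fun y => ‖f y‖ₑ ^ p) x} ≤ m := by
    refine (ENNReal.mul_le_mul_iff_right (ENNReal.rpow_pos (pos_iff_ne_zero.2 hL0) hL).ne'
      (ENNReal.rpow_ne_top_of_nonneg hp.le hL)).1 ?_
    calc L ^ p * (c * _) = (L ^ p * c) * _ := (mul_assoc _ _ _).symm
      _ ≤ w ^ p * _ := by gcongr
      _ ≤ 4 * ∫⁻ y, ‖f y‖ₑ ^ p := mul_volume_lt_maximalFunction_le _ _
      _ ≤ L ^ p * m := hf.trans_eq (mul_comm _ _)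
  have hg_level : c * volume {x | c < maximalFunction (fun y => ‖g y‖ₑ) x} ≤ 4 * m :=
    (mul_volume_lt_maximalFunction_le _ c).trans (by gcongr)
  calc c * volume {x | w * c < bimax p f g x}
      ≤ c * (volume {x | w ^ p < maximalFunction (fun y => ‖f y‖ₑ ^ p) x} +
        volume {x | c < maximalFunction (fun y => ‖g y‖ₑ) x}) := by
        gcongr
        exact (measure_mono (lt_bimax_subset hp f g w c)).trans (measure_union_le _ _)
    _ ≤ m + 4 * m := by rw [mul_add]; gcongr
    _ = 5 * m := by ring

theorem mul_volume_lt_bimax_le {p : ℝ} (hp : 0 < p) (hp2 : p ≤ 2) {f g : ℝ → ℂ}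
    {L m : ℝ≥0∞} (hL : L ≠ ⊤) (hf : 4 * ∫⁻ y, ‖f y‖ₑ ^ p ≤ m * L ^ p)
    (hg : ∫⁻ y, ‖g y‖ₑ ≤ m) (k : ℕ) :
    L * (2⁻¹ ^ 3) ^ k * volume {x | L * (2⁻¹ ^ 3) ^ (k + 1) < bimax p f g x} ≤
      20 * L * m * 2⁻¹ ^ k := by
  rcases eq_or_ne L 0 with rfl | hL0
  · simp
  set c : ℝ≥0∞ := 2⁻¹ ^ (2 * (k + 1))
  set w : ℝ≥0∞ := L * 2⁻¹ ^ (k + 1)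
  have hwc : L ^ p * c ≤ w ^ p := by
    rw [ENNReal.mul_rpow_of_nonneg _ _ hp.le]
    gcongr
    calc c = (2⁻¹ ^ (k + 1)) ^ (2 : ℝ) := by rw [ENNReal.rpow_two, ← pow_mul, mul_comm]
      _ ≤ (2⁻¹ ^ (k + 1)) ^ p :=
        ENNReal.rpow_le_rpow_of_exponent_ge (pow_le_one₀ zero_le (by norm_num)) hp2
  have h4 : (4 : ℝ≥0∞) * 2⁻¹ ^ 2 = 1 := by
    rw [← ENNReal.inv_pow, show (2 : ℝ≥0∞) ^ 2 = 4 by norm_num]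
    exact ENNReal.mul_inv_cancel (by norm_num) (by norm_num)
  have hq : ((2 : ℝ≥0∞)⁻¹ ^ 3) ^ k = 4 * 2⁻¹ ^ k * c :=
    calc ((2 : ℝ≥0∞)⁻¹ ^ 3) ^ k = (2⁻¹ ^ 3) ^ k * (4 * 2⁻¹ ^ 2) := by rw [h4, mul_one]
      _ = 4 * 2⁻¹ ^ k * c := by ring
  calc L * (2⁻¹ ^ 3) ^ k * volume {x | L * (2⁻¹ ^ 3) ^ (k + 1) < bimax p f g x}
      = 4 * L * 2⁻¹ ^ k * (c * volume {x | w * c < bimax p f g x}) := by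
        rw [show L * (2⁻¹ ^ 3) ^ (k + 1) = w * c by ring, hq]; ring
    _ ≤ 4 * L * 2⁻¹ ^ k * (5 * m) :=
        mul_le_mul_right (mul_volume_lt_bimax_le_of_le hp hL0 hL hwc hf hg) _
    _ = 20 * L * m * 2⁻¹ ^ k := by ring

theorem lintegral_bimax_le {p : ℝ} (hp : 0 < p) (hp2 : p ≤ 2) {f g : ℝ → ℂ} {E : Set ℝ}
    (hE : MeasurableSet E) (hg : ∀ y, ‖g y‖ₑ ≤ E.indicator 1 y) {L m : ℝ≥0∞} (hL : L ≠ ⊤)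
    (hfE : ∀ y ∈ E, maximalFunction (fun z => ‖f z‖ₑ ^ p) y ≤ L ^ p)
    (hf : 4 * ∫⁻ y, ‖f y‖ₑ ^ p ≤ m * L ^ p) (hEm : volume E ≤ m) :
    ∫⁻ x, bimax p f g x ≤ 40 * L * m := by
  have hg_int : ∫⁻ y, ‖g y‖ₑ ≤ m :=
    calc ∫⁻ y, ‖g y‖ₑ ≤ ∫⁻ y, E.indicator 1 y := lintegral_mono hg
      _ = volume E := lintegral_indicator_one hE
      _ ≤ m := hEm
  calc ∫⁻ x, bimax p f g x
      ≤ ∑' k : ℕ, L * (2⁻¹ ^ 3) ^ k * volume {x | L * (2⁻¹ ^ 3) ^ (k + 1) < bimax p f g x} :=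
        lintegral_le_tsum_mul_measure_lt volume (measurable_bimax p f g) hL
          (pow_lt_one₀ zero_le (ENNReal.inv_lt_one.2 one_lt_two) (by norm_num))
          (bimax_le_of_maximalFunction_le hp hE hg hfE)
    _ ≤ ∑' k : ℕ, 20 * L * m * 2⁻¹ ^ k :=
        ENNReal.tsum_le_tsum (mul_volume_lt_bimax_le hp hp2 hL hf hg_int)
    _ = 40 * L * m := by
        rw [ENNReal.tsum_mul_left, ENNReal.tsum_geometric, ENNReal.one_sub_inv_two, inv_inv]
        ring

section testFunction

variable {α : Type*}

noncomputable def testFunction (E : Set α) (φ : α → ℂ) : α → ℂ :=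
  E.indicator fun y => starRingEnd ℂ (φ y) / ‖φ y‖

theorem norm_conj_div_norm_le_one (z : ℂ) : ‖starRingEnd ℂ z / ‖z‖‖ ≤ 1 := by
  rw [norm_div, Complex.norm_conj, Complex.norm_real, norm_norm]
  exact div_self_le_one _

theorem enorm_testFunction_le (E : Set α) (φ : α → ℂ) (y : α) :
    ‖testFunction E φ y‖ₑ ≤ E.indicator 1 y := by
  by_cases hy : y ∈ E
  · rw [testFunction, indicator_of_mem hy, indicator_of_mem hy, ← ofReal_norm]
    exact ENNReal.ofReal_le_one.2 (norm_conj_div_norm_le_one _)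
  · simp [testFunction, hy]

theorem mul_testFunction (E : Set α) (φ : α → ℂ) (x : α) :
    φ x * testFunction E φ x = E.indicator (fun y => (‖φ y‖ : ℂ)) x := by
  by_cases hx : x ∈ E
  · rw [testFunction, indicator_of_mem hx, indicator_of_mem hx]
    rcases eq_or_ne (φ x) 0 with h0 | h0
    · simp [h0]
    rw [← mul_div_assoc, Complex.mul_conj', sq, mul_div_assoc,
      div_self (Complex.ofReal_ne_zero.2 (norm_ne_zero_iff.2 h0)), mul_one]
  · simp [testFunction, hx]

theorem ofReal_mul_measure_le_norm_integral_mul_testFunction [MeasurableSpace α]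
    {μ : Measure α} {φ : α → ℂ} (hφ : Measurable φ) {E : Set α} (hE : MeasurableSet E)
    (hEμ : μ E ≠ ⊤) {t M : ℝ} (hlow : ∀ x ∈ E, t ≤ ‖φ x‖) (hup : ∀ x ∈ E, ‖φ x‖ ≤ M) :
    ENNReal.ofReal t * μ E ≤ ENNReal.ofReal ‖∫ x, φ x * testFunction E φ x ∂μ‖ := by
  have hint : IntegrableOn φ E μ := Measure.integrableOn_of_bounded hEμ hφ.aestronglyMeasurable
    ((ae_restrict_iff' hE).2 (Filter.Eventually.of_forall hup))
  calc ENNReal.ofReal t * μ E = ∫⁻ _ in E, ENNReal.ofReal t ∂μ := (setLIntegral_const _ _).symm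
    _ ≤ ∫⁻ x in E, ‖φ x‖ₑ ∂μ := setLIntegral_mono' hE fun x hx =>
        (ENNReal.ofReal_le_ofReal (hlow x hx)).trans_eq (ofReal_norm _)
    _ = ENNReal.ofReal (∫ x in E, ‖φ x‖ ∂μ) := (ofReal_integral_norm_eq_lintegral_enorm hint).symm
    _ = ENNReal.ofReal ‖∫ x, φ x * testFunction E φ x ∂μ‖ := by
        rw [funext (mul_testFunction E φ), integral_indicator hE, integral_complex_ofReal,
          Complex.norm_real, Real.norm_of_nonneg (setIntegral_nonneg hE fun _ _ => norm_nonneg _)]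

end testFunction

theorem nice_testFunction {φ : ℝ → ℂ} (hφ : Measurable φ) {E : Set ℝ} (hE : MeasurableSet E)
    {R : ℝ} (hER : E ⊆ Icc (-R) R) : Nice (testFunction E φ) := by
  refine ⟨?_, ⟨1, fun x => ?_⟩, ⟨R, fun x hx => ?_⟩⟩
  · exact ((Complex.continuous_conj.measurable.comp hφ).div
      (Complex.measurable_ofReal.comp hφ.norm)).indicator hE
  · by_cases hx : x ∈ E
    · rw [testFunction, indicator_of_mem hx]; exact norm_conj_div_norm_le_one _
    · simp [testFunction, hx]
  · refine indicator_of_notMem (fun hxE => ?_) _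
    exact hx.not_ge (abs_le.2 (hER hxE))

theorem ofReal_mul_measure_le_of_sparse_bound {p : ℝ} (hp : 0 < p) (hp2 : p ≤ 2)
    {f φ : ℝ → ℂ} (hφ : Measurable φ) {a : ℝ≥0∞}
    (hsparse : ∀ g, Nice g → ENNReal.ofReal ‖∫ x, φ x * g x‖ ≤ a * ∫⁻ x, bimax p f g x)
    {E : Set ℝ} (hE : MeasurableSet E) {R t M : ℝ} (hER : E ⊆ Icc (-R) R)
    (hlow : ∀ x ∈ E, t ≤ ‖φ x‖) (hup : ∀ x ∈ E, ‖φ x‖ ≤ M) {L m : ℝ≥0∞} (hL : L ≠ ⊤)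
    (hfE : ∀ y ∈ E, maximalFunction (fun z => ‖f z‖ₑ ^ p) y ≤ L ^ p)
    (hf : 4 * ∫⁻ y, ‖f y‖ₑ ^ p ≤ m * L ^ p) (hEm : volume E ≤ m) :
    ENNReal.ofReal t * volume E ≤ a * (40 * L * m) :=
  calc ENNReal.ofReal t * volume E
      ≤ ENNReal.ofReal ‖∫ x, φ x * testFunction E φ x‖ :=
        ofReal_mul_measure_le_norm_integral_mul_testFunction hφ hE
          (ne_top_of_le_ne_top measure_Icc_lt_top.ne (measure_mono hER)) hlow hup
    _ ≤ a * ∫⁻ x, bimax p f (testFunction E φ) x := hsparse _ (nice_testFunction hφ hE hER)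
    _ ≤ a * (40 * L * m) := by
        gcongr
        exact lintegral_bimax_le hp hp2 hE (enorm_testFunction_le _ _) hL hfE hf hEm

theorem measure_mul_rpow_le_of_sparse_bound {p : ℝ} (hp : 0 < p) (hp2 : p ≤ 2) {f φ : ℝ → ℂ}
    (hφ : Measurable φ) {a : ℝ≥0∞}
    (hsparse : ∀ g, Nice g → ENNReal.ofReal ‖∫ x, φ x * g x‖ ≤ a * ∫⁻ x, bimax p f g x)
    (hf : ∫⁻ x, ‖f x‖ₑ ^ p ≠ ⊤) {E : Set ℝ} (hE : MeasurableSet E) {R t M : ℝ}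
    (hER : E ⊆ Icc (-R) R) (hlow : ∀ x ∈ E, t ≤ ‖φ x‖) (hup : ∀ x ∈ E, ‖φ x‖ ≤ M) :
    volume E * ENNReal.ofReal t ^ p ≤ 8 * (80 * a) ^ p * ∫⁻ x, ‖f x‖ₑ ^ p := by
  set U := ∫⁻ x, ‖f x‖ₑ ^ p
  have hEt : volume E ≠ ⊤ := ne_top_of_le_ne_top measure_Icc_lt_top.ne (measure_mono hER)
  rcases eq_or_ne (volume E) 0 with hE0 | hE0
  · simp [hE0]
  set m := volume E / 2
  have hm0 : m ≠ 0 := ENNReal.div_ne_zero.2 ⟨hE0, ENNReal.ofNat_ne_top⟩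
  have hmt : m ≠ ⊤ := ENNReal.div_ne_top hEt two_ne_zero
  have hEm : volume E = 2 * m := (ENNReal.mul_div_cancel two_ne_zero ENNReal.ofNat_ne_top).symm
  set L := (4 * U / m) ^ p⁻¹
  have hLp : L ^ p = 4 * U / m := ENNReal.rpow_inv_rpow hp.ne' _
  have hL : L ≠ ⊤ := ENNReal.rpow_ne_top_of_nonneg (inv_nonneg.2 hp.le)
    (ENNReal.div_ne_top (ENNReal.mul_ne_top ENNReal.ofNat_ne_top hf) hm0)
  set G := {x | L ^ p < maximalFunction (fun y => ‖f y‖ₑ ^ p) x}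
  have hG : volume G ≤ m := by
    simpa only [G, hLp] using volume_lt_maximalFunction_le (fun y => ‖f y‖ₑ ^ p) m
  have hmE' : m ≤ volume (E \ G) :=
    calc m = volume E - m := (ENNReal.sub_half hEt).symm
      _ ≤ volume E - volume G := tsub_le_tsub_left hG _
      _ ≤ volume (E \ G) := le_measure_sdiff
  have hU : 4 * U ≤ volume E * L ^ p :=
    calc 4 * U = m * L ^ p := by rw [hLp, ENNReal.mul_div_cancel hm0 hmt]
      _ ≤ volume E * L ^ p := by gcongr; exact ENNReal.half_le_self
  have hτ : ENNReal.ofReal t ≤ 80 * a * L := by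
    refine (ENNReal.mul_le_mul_iff_left hm0 hmt).1 ?_
    calc ENNReal.ofReal t * m ≤ ENNReal.ofReal t * volume (E \ G) := by gcongr
      _ ≤ a * (40 * L * volume E) :=
        ofReal_mul_measure_le_of_sparse_bound hp hp2 hφ hsparse
          (hE.diff (isOpen_lt_maximalFunction _ _).measurableSet) (sdiff_subset.trans hER)
          (fun x hx => hlow x hx.1) (fun x hx => hup x hx.1) hL (fun y hy => not_lt.1 hy.2) hU
          (measure_mono sdiff_subset)
      _ = 80 * a * L * m := by rw [hEm]; ring
  calc volume E * ENNReal.ofReal t ^ p ≤ volume E * (80 * a * L) ^ p := by gcongr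
    _ = 2 * (80 * a) ^ p * (m * (4 * U / m)) := by
        rw [ENNReal.mul_rpow_of_nonneg _ _ hp.le, hLp, hEm]; ring
    _ = 8 * (80 * a) ^ p * U := by rw [ENNReal.mul_div_cancel hm0 hmt]; ring

theorem measure_lt_norm_eq_iSup (μ : Measure ℝ) (φ : ℝ → ℂ) (t : ℝ) :
    μ {x | t < ‖φ x‖} = ⨆ n : ℕ, μ {x | t < ‖φ x‖ ∧ ‖φ x‖ ≤ n ∧ |x| ≤ n} := by
  rw [← Monotone.measure_iUnion]
  · congr 1
    ext x
    simp only [mem_iUnion, mem_ofPred_eq]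
    refine ⟨fun hx => ?_, fun ⟨_, hx, _⟩ => hx⟩
    obtain ⟨n, hn⟩ := exists_nat_ge (max ‖φ x‖ |x|)
    exact ⟨n, hx, (le_max_left _ _).trans hn, (le_max_right _ _).trans hn⟩
  · intro m n hmn x ⟨hx, hφ, habs⟩
    have hmn' : (m : ℝ) ≤ n := Nat.cast_le.2 hmn
    exact ⟨hx, hφ.trans hmn', habs.trans hmn'⟩

theorem measure_lt_norm_mul_rpow_le_of_sparse_bound {p : ℝ} (hp : 0 < p) (hp2 : p ≤ 2)
    {f φ : ℝ → ℂ} (hφ : Measurable φ) {a : ℝ≥0∞}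
    (hsparse : ∀ g, Nice g → ENNReal.ofReal ‖∫ x, φ x * g x‖ ≤ a * ∫⁻ x, bimax p f g x)
    (hf : ∫⁻ x, ‖f x‖ₑ ^ p ≠ ⊤) (t : ℝ) :
    volume {x | t < ‖φ x‖} * ENNReal.ofReal t ^ p ≤ 8 * (80 * a) ^ p * ∫⁻ x, ‖f x‖ₑ ^ p := by
  rw [measure_lt_norm_eq_iSup, ENNReal.iSup_mul]
  refine iSup_le fun n => measure_mul_rpow_le_of_sparse_bound hp hp2 hφ hsparse hf
    ((measurableSet_lt measurable_const hφ.norm).inter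
      ((measurableSet_le hφ.norm measurable_const).inter
        (measurableSet_le continuous_abs.measurable measurable_const)))
    (R := n) (fun x hx => abs_le.1 hx.2.2) (fun x hx => hx.1.le) (fun x hx => hx.2.1)

theorem weakNorm_le_of_forall {α : Type*} [MeasurableSpace α] {μ : Measure α} {g : α → ℂ}
    {p : ℝ} (hp : 0 < p) {K : ℝ≥0∞}
    (h : ∀ t : ℝ, 0 < t → μ {x | t < ‖g x‖} * ENNReal.ofReal t ^ p ≤ K ^ p) :
    weakNorm μ g p ≤ K := by
  refine iSup₂_le fun t ht => ?_
  calc ENNReal.ofReal t * μ {x | t < ‖g x‖} ^ (1 / p)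
      = (μ {x | t < ‖g x‖} * ENNReal.ofReal t ^ p) ^ p⁻¹ := by
        rw [ENNReal.mul_rpow_of_nonneg _ _ (inv_nonneg.2 hp.le), ENNReal.rpow_rpow_inv hp.ne',
          one_div, mul_comm]
    _ ≤ (K ^ p) ^ p⁻¹ := ENNReal.rpow_le_rpow (h t ht) (inv_nonneg.2 hp.le)
    _ = K := ENNReal.rpow_rpow_inv hp.ne' K

theorem Nice.lintegral_enorm_rpow_ne_top {f : ℝ → ℂ} (hf : Nice f) {p : ℝ} (hp : 0 < p) :
    ∫⁻ x, ‖f x‖ₑ ^ p ≠ ⊤ := by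
  obtain ⟨-, ⟨B, hB⟩, ⟨R, hR⟩⟩ := hf
  have hle : ∀ x, ‖f x‖ₑ ^ p ≤ (Icc (-R) R).indicator (fun _ => ENNReal.ofReal B ^ p) x := by
    intro x
    by_cases hx : x ∈ Icc (-R) R
    · rw [indicator_of_mem hx, ← ofReal_norm]
      exact ENNReal.rpow_le_rpow (ENNReal.ofReal_le_ofReal (hB x)) hp.le
    · have : R < |x| := lt_of_not_ge fun h => hx (abs_le.1 h)
      simp [hR x this, hp]
  refine ne_top_of_le_ne_top ?_ (lintegral_mono hle)
  rw [lintegral_indicator_const measurableSet_Icc]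
  exact ENNReal.mul_ne_top (ENNReal.rpow_ne_top_of_nonneg hp.le ENNReal.ofReal_ne_top)
    measure_Icc_lt_top.ne

/-- sparse-to-weak-type implication with sharp constant: a `(p,1)`-sparse
form bound `|⟨Tf, g⟩| ≤ A ‖M_{(p,1)}(f,g)‖₁` implies the weak-type bound
`‖Tf‖_{L^{p,∞}} ≤ C₀ A ‖f‖_p` with an absolute constant `C₀`, for `1 < p ≤ 2`. -/
theorem stmt15 :
    ∃ C₀ : ℝ, 0 < C₀ ∧
      ∀ p : ℝ, 1 < p → p ≤ 2 →
      ∀ (T : (ℝ → ℂ) → ℝ → ℂ) (A : ℝ), 0 ≤ A →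
        (∀ f, Nice f → Measurable (T f)) →
        (∀ f g, Nice f → Nice g →
          ENNReal.ofReal ‖∫ x : ℝ, T f x * g x‖ ≤
            ENNReal.ofReal A * ∫⁻ x : ℝ, bimax p f g x) →
        ∀ f, Nice f →
          weakNorm (volume : Measure ℝ) (T f) p ≤
            ENNReal.ofReal (C₀ * A) * eLpNorm f (ENNReal.ofReal p) volume := by
  refine ⟨640, by norm_num, fun p hp1 hp2 T A _ hTm hsparse f hf => ?_⟩
  have hp : 0 < p := by linarith
  rw [eLpNorm_eq_lintegral_rpow_enorm_toReal (by simpa using hp) ENNReal.ofReal_ne_top,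
    ENNReal.toReal_ofReal hp.le]
  refine weakNorm_le_of_forall hp fun t _ => ?_
  calc volume {x | t < ‖T f x‖} * ENNReal.ofReal t ^ p
      ≤ 8 * (80 * ENNReal.ofReal A) ^ p * ∫⁻ x, ‖f x‖ₑ ^ p :=
        measure_lt_norm_mul_rpow_le_of_sparse_bound hp hp2 (hTm f hf)
          (fun g hg => hsparse f g hf hg) (hf.lintegral_enorm_rpow_ne_top hp) t
    _ ≤ 8 ^ p * (80 * ENNReal.ofReal A) ^ p * ∫⁻ x, ‖f x‖ₑ ^ p := by
        gcongr
        calc (8 : ℝ≥0∞) = 8 ^ (1 : ℝ) := (ENNReal.rpow_one 8).symm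
          _ ≤ 8 ^ p := ENNReal.rpow_le_rpow_of_exponent_le (by norm_num) hp1.le
    _ = (ENNReal.ofReal (640 * A) * (∫⁻ x, ‖f x‖ₑ ^ p) ^ (1 / p)) ^ p := by
        conv_rhs => rw [ENNReal.mul_rpow_of_nonneg _ _ hp.le, one_div,
          ENNReal.rpow_inv_rpow hp.ne', ENNReal.ofReal_mul (by norm_num),
          show ENNReal.ofReal 640 = 8 * 80 by norm_num, mul_assoc,
          ENNReal.mul_rpow_of_nonneg _ _ hp.le]
end
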